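/- arXiv:2604.18568 — 12 statements merged into one kernel-verified Lean document; each statement's English description precedes it below -/
import Mathlib

section
/- Let p be a prime, R a commutative ring with CharP R p, n : ℕ, and μ : Matrix (Fin n) (Fin n) R. Then ξ(μ) = (det μ)^(p−1), where ξ(μ) denotes the (finite) sum, over all functions a : Fin n → Fin n → ℕ satisfying (∀ k, ∑_l a k l = p−1) and (∀ l, ∑_k a k l = p−1), of the term ((∏_k Nat.multinomial Finset.univ (fun l => a l k) : ℕ) : R) * ∏_k ∏_l (μ l k)^(a l k). -/
/-!
Over `𝔽_p`, evaluate `S(ν) = ∑_{x ∈ 𝔽_p^n} ∏_k ((x ν)_k)^(p-1)` in two ways. Expanding each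
factor by the multinomial theorem and using `∑_t t^m = 0` for `m < p - 1`, `= -1` for
`m = p - 1`, only exponent matrices with all row and column sums `p - 1` survive, giving
`S(ν) = (-1)^n ξ(ν)`. Substituting `y = x ν` gives `S(ν) = (-1)^n` when `ν` is invertible,
while for singular `ν` the summand is invariant along a line of the kernel, so `S(ν) = 0`.
Hence `ξ = det^(p-1)` on `𝔽_p`-points. For the generic matrix both sides are polynomials of
degree `< p` in each entry, so they coincide over `𝔽_p`, and specialising the generic matrix
gives the identity in every ring of characteristic `p`.
-/

open Finset

/-- The operator `ξ` from the paper: the sum over all matrices of natural numbers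
`a : Fin n → Fin n → ℕ` whose every row sum and every column sum equals `p - 1`
(all such `a` have entries `< p`, so the index set below captures exactly these) of
`(∏ k, multinomial (a · k)) * ∏ k, ∏ l, (μ l k) ^ (a l k)`. -/
noncomputable def xi (p n : ℕ) {R : Type*} [CommRing R] (μ : Matrix (Fin n) (Fin n) R) : R :=
  ∑ a ∈ Finset.filter
      (fun a : Fin n → Fin n → ℕ =>
        (∀ k, ∑ l, a k l = p - 1) ∧ (∀ l, ∑ k, a k l = p - 1))
      (Fintype.piFinset fun _ => Fintype.piFinset fun _ => Finset.range p),
    ((∏ k, Nat.multinomial Finset.univ (fun l => a l k) : ℕ) : R) *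
      ∏ k, ∏ l, (μ l k) ^ (a l k)


open Matrix

namespace FiniteField

variable {K : Type*} [Field K] [Fintype K]

theorem sum_pow_card_sub_one : ∑ t : K, t ^ (Fintype.card K - 1) = -1 := by
  classical
  have hq : Fintype.card K - 1 ≠ 0 := by have := Fintype.one_lt_card (α := K); omega
  rw [← sum_erase_add _ _ (mem_univ 0), zero_pow hq, add_zero,
    sum_congr rfl fun t ht => pow_card_sub_one_eq_one t (ne_of_mem_erase ht), sum_const,
    card_erase_of_mem (mem_univ _), card_univ, nsmul_one,
    Nat.cast_pred Fintype.card_pos, cast_card_eq_zero, zero_sub]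

theorem sum_eq_zero_of_add_smul_invariant {ι M : Type*} [Fintype ι] [DecidableEq ι]
    [AddCommGroup M] [Module K M] (g : (ι → K) → M) {z : ι → K} (hz : z ≠ 0)
    (hg : ∀ x (c : K), g (x + c • z) = g x) : ∑ x, g x = 0 := by
  classical
  obtain ⟨i, hi⟩ : ∃ i, z i ≠ 0 := by simpa [funext_iff] using hz
  have hfiber : ∀ c : K, ∑ x with x i = c, g x = ∑ x with x i = 0, g x := fun c =>
    sum_nbij' (· - (c / z i) • z) (· + (c / z i) • z)
      (by simp +contextual [div_mul_cancel₀ _ hi]) (by simp +contextual [div_mul_cancel₀ _ hi])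
      (by simp) (by simp)
      fun x _ => by rw [← hg (x - _) (c / z i), sub_add_cancel]
  rw [← sum_fiberwise univ (· i) g, sum_congr rfl fun c _ => hfiber c, sum_const, card_univ,
    ← Nat.cast_smul_eq_nsmul K, cast_card_eq_zero, zero_smul]

theorem sum_prod_vecMul_pow_card_sub_one {ι : Type*} [Fintype ι] [DecidableEq ι]
    (ν : Matrix ι ι K) :
    ∑ x : ι → K, ∏ k, (x ᵥ* ν) k ^ (Fintype.card K - 1)
      = (-1) ^ Fintype.card ι * ν.det ^ (Fintype.card K - 1) := by
  by_cases hdet : ν.det = 0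
  · obtain ⟨z, hz, hzν⟩ := exists_vecMul_eq_zero_iff.mpr hdet
    have hq : Fintype.card K - 1 ≠ 0 := by have := Fintype.one_lt_card (α := K); omega
    rw [hdet, zero_pow hq, mul_zero]
    exact sum_eq_zero_of_add_smul_invariant (fun x => ∏ k, (x ᵥ* ν) k ^ (Fintype.card K - 1))
      hz fun x c => by simp only [add_vecMul, smul_vecMul, hzν, smul_zero, add_zero]
  · have hbij : Function.Bijective ν.vecMul :=
      (Finite.injective_iff_bijective).mp <| vecMul_injective_iff_isUnit.mpr <|
        (isUnit_iff_isUnit_det ν).mpr (isUnit_iff_ne_zero.mpr hdet)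
    have hsplit : ∑ y : ι → K, ∏ k, y k ^ (Fintype.card K - 1)
        = ∏ _k : ι, ∑ t : K, t ^ (Fintype.card K - 1) :=
      (Fintype.prod_sum fun _ t => t ^ (Fintype.card K - 1)).symm
    rw [hbij.sum_comp fun y => ∏ k, y k ^ (Fintype.card K - 1), hsplit, sum_pow_card_sub_one,
      pow_card_sub_one_eq_one _ hdet, mul_one, prod_const, card_univ]

theorem prod_sum_pow_sum_eq_ite {ι : Type*} [Fintype ι] (b : ι → ι → ℕ)
    (hrow : ∀ k, ∑ l, b k l = Fintype.card K - 1) :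
    ∏ l, ∑ t : K, t ^ (∑ k, b k l)
      = if ∀ l, ∑ k, b k l = Fintype.card K - 1 then (-1) ^ Fintype.card ι else 0 := by
  split_ifs with hcol
  · simp [hcol, sum_pow_card_sub_one]
  · obtain ⟨l, hl⟩ : ∃ l, ∑ k, b k l < Fintype.card K - 1 := by
      by_contra! hge
      exact hcol fun l => ((sum_eq_sum_iff_of_le fun l _ => hge l).mp
        (by rw [sum_comm]; simp [hrow]) l (mem_univ l)).symm
    exact prod_eq_zero (mem_univ l) (sum_pow_lt_card_sub_one K _ hl)

end FiniteField

theorem RingHom.map_xi {p n : ℕ} {R S : Type*} [CommRing R] [CommRing S] (f : R →+* S)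
    (μ : Matrix (Fin n) (Fin n) R) : f (xi p n μ) = xi p n (μ.map f) := by
  simp [xi, map_sum, map_prod]

theorem Matrix.prod_vecMul_pow_eq_sum {ι R : Type*} [Fintype ι] [DecidableEq ι] [CommSemiring R]
    (ν : Matrix ι ι R) (x : ι → R) (m : ℕ) :
    ∏ k, (x ᵥ* ν) k ^ m
      = ∑ b ∈ Fintype.piFinset fun _ : ι => piAntidiag univ m,
          ((∏ k, Nat.multinomial univ (b k) : ℕ) : R) * (∏ k, ∏ l, ν l k ^ b k l) *
            ∏ l, x l ^ ∑ k, b k l := by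
  have hexp : ∀ k, (x ᵥ* ν) k ^ m
      = ∑ c ∈ piAntidiag univ m, (Nat.multinomial univ c : R) * ∏ l, (x l * ν l k) ^ c l :=
    fun k => sum_pow_eq_sum_piAntidiag _ _ _
  rw [prod_congr rfl fun k _ => hexp k, prod_univ_sum]
  refine sum_congr rfl fun b _ => ?_
  simp only [mul_pow, prod_mul_distrib, Nat.cast_prod]
  rw [prod_comm (f := fun k l => x l ^ b k l)]
  simp only [prod_pow_eq_pow_sum]
  ring

theorem xi_eq_sum_piAntidiag {p n : ℕ} (hp : 0 < p) {R : Type*} [CommRing R]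
    (μ : Matrix (Fin n) (Fin n) R) :
    xi p n μ
      = ∑ b ∈ Fintype.piFinset (fun _ : Fin n => piAntidiag univ (p - 1)) with
            ∀ l, ∑ k, b k l = p - 1,
          ((∏ k, Nat.multinomial univ (b k) : ℕ) : R) * ∏ k, ∏ l, μ l k ^ b k l := by
  refine sum_equiv (Equiv.piComm fun _ _ => ℕ) (fun a => ?_) fun a _ => rfl
  simp only [mem_filter, Fintype.mem_piFinset, mem_range, mem_piAntidiag, Equiv.piComm_apply,
    Function.swap, mem_univ, implies_true, and_true]
  refine ⟨fun ⟨_, hrow, hcol⟩ => ⟨hcol, hrow⟩, fun ⟨hcol, hrow⟩ => ⟨fun k l => ?_, hrow, hcol⟩⟩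
  have hle := (single_le_sum (fun l _ => Nat.zero_le (a k l)) (mem_univ l)).trans_eq (hrow k)
  omega

theorem sum_prod_vecMul_pow_eq_neg_one_pow_mul_xi {p n : ℕ} [Fact p.Prime]
    (ν : Matrix (Fin n) (Fin n) (ZMod p)) :
    ∑ x : Fin n → ZMod p, ∏ k, (x ᵥ* ν) k ^ (p - 1) = (-1) ^ n * xi p n ν := by
  set B := Fintype.piFinset fun _ : Fin n => piAntidiag (univ : Finset (Fin n)) (p - 1)
  set c : (Fin n → Fin n → ℕ) → ZMod p := fun b =>
    ((∏ k, Nat.multinomial univ (b k) : ℕ) : ZMod p) * ∏ k, ∏ l, ν l k ^ b k l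
  have hpower : ∀ b ∈ B, ∏ l, ∑ t : ZMod p, t ^ ∑ k, b k l
      = if ∀ l, ∑ k, b k l = p - 1 then (-1) ^ n else 0 := fun b hb => by
    have hrow : ∀ k, ∑ l, b k l = Fintype.card (ZMod p) - 1 := fun k => by
      rw [ZMod.card]; exact (mem_piAntidiag.mp (Fintype.mem_piFinset.mp hb k)).1
    simpa [ZMod.card] using FiniteField.prod_sum_pow_sum_eq_ite b hrow
  calc ∑ x : Fin n → ZMod p, ∏ k, (x ᵥ* ν) k ^ (p - 1)
      = ∑ b ∈ B, c b * ∏ l, ∑ t : ZMod p, t ^ ∑ k, b k l := by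
        simp_rw [prod_vecMul_pow_eq_sum]
        rw [sum_comm]
        refine sum_congr rfl fun b _ => ?_
        rw [← mul_sum, Fintype.prod_sum fun l (t : ZMod p) => t ^ ∑ k, b k l]
    _ = ∑ b ∈ B, c b * if ∀ l, ∑ k, b k l = p - 1 then (-1) ^ n else 0 :=
        sum_congr rfl fun b hb => by rw [hpower b hb]
    _ = (-1) ^ n * xi p n ν := by
        rw [xi_eq_sum_piAntidiag (Fact.out : p.Prime).pos, mul_sum, sum_filter]
        exact sum_congr rfl fun b _ => by split_ifs <;> simp [c, mul_comm]

theorem xi_zmod_eq_det_pow {p n : ℕ} [Fact p.Prime] (ν : Matrix (Fin n) (Fin n) (ZMod p)) :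
    xi p n ν = ν.det ^ (p - 1) := by
  have h := (sum_prod_vecMul_pow_eq_neg_one_pow_mul_xi ν).symm.trans
    (by simpa [ZMod.card] using FiniteField.sum_prod_vecMul_pow_card_sub_one ν)
  exact mul_left_cancel₀ (pow_ne_zero _ (neg_ne_zero.mpr one_ne_zero)) h

universe u

namespace MvPolynomial

theorem degreeOf_prod_X_pow_le {σ ι R : Type*} [CommSemiring R] [Nontrivial R] [DecidableEq σ]
    (i : σ) (s : Finset ι) (v : ι → σ) (e : ι → ℕ) :
    degreeOf i (∏ j ∈ s, X (v j) ^ e j : MvPolynomial σ R) ≤ ∑ j ∈ s with v j = i, e j := by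
  rw [sum_filter]
  refine (degreeOf_prod_le _ _ _).trans (sum_le_sum fun j _ => ?_)
  split_ifs with h
  · rw [h, degreeOf_X_self_pow]
  · rw [degreeOf_X_pow_of_ne _ (Ne.symm h)]

theorem eq_of_eval_eq_of_degreeOf_le {σ K : Type u} [Finite σ] [Field K] [Fintype K]
    {f g : MvPolynomial σ K} (hf : ∀ i, degreeOf i f ≤ Fintype.card K - 1)
    (hg : ∀ i, degreeOf i g ≤ Fintype.card K - 1) (h : ∀ v, eval v f = eval v g) : f = g := by
  have hmem : ∀ {f : MvPolynomial σ K}, (∀ i, degreeOf i f ≤ Fintype.card K - 1) →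
      f ∈ restrictDegree σ K (Fintype.card K - 1) := fun hf =>
    (mem_restrictDegree _ _ _).mpr fun s hs i => degreeOf_le_iff.mp (hf i) s hs
  exact sub_eq_zero.mp <| eq_zero_of_eval_eq_zero σ K (f - g)
    (fun v => by rw [map_sub, h, sub_self]) (sub_mem (hmem hf) (hmem hg))

end MvPolynomial

open MvPolynomial

theorem degreeOf_xi_mvPolynomialX_le {p n : ℕ} {R : Type*} [CommRing R] [Nontrivial R]
    (i : Fin n × Fin n) : degreeOf i (xi p n (mvPolynomialX (Fin n) (Fin n) R)) ≤ p - 1 := by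
  refine (degreeOf_sum_le _ _ _).trans (Finset.sup_le fun a ha => ?_)
  have hlt : a i.1 i.2 < p := by
    simp only [mem_filter, Fintype.mem_piFinset, mem_range] at ha
    exact ha.1 i.1 i.2
  have hsingle : (univ.filter fun q : Fin n × Fin n => q.swap = i) = {i.swap} := by
    ext q; simp [Prod.swap_eq_iff_eq_swap]
  rw [← map_natCast (C : R →+* MvPolynomial (Fin n × Fin n) R), mvPolynomialX]
  calc _ ≤ degreeOf i (∏ k, ∏ l, X (l, k) ^ a l k : MvPolynomial (Fin n × Fin n) R) :=
        degreeOf_C_mul_le _ _ _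
    _ = degreeOf i (∏ q : Fin n × Fin n, X q.swap ^ a q.2 q.1 : MvPolynomial _ R) := by
        rw [Fintype.prod_prod_type]; rfl
    _ ≤ ∑ q : Fin n × Fin n with q.swap = i, a q.2 q.1 := degreeOf_prod_X_pow_le _ _ _ _
    _ ≤ p - 1 := by rw [hsingle, sum_singleton, Prod.snd_swap, Prod.fst_swap]; omega

theorem degreeOf_det_mvPolynomialX_le_one {ι R : Type*} [Fintype ι] [DecidableEq ι] [CommRing R]
    [Nontrivial R] (i : ι × ι) : degreeOf i (mvPolynomialX ι ι R).det ≤ 1 := by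
  rw [det_apply]
  refine (degreeOf_sum_le _ _ _).trans (Finset.sup_le fun τ _ => ?_)
  rw [Units.smul_def, zsmul_eq_mul, ← map_intCast (C : R →+* MvPolynomial (ι × ι) R)]
  refine (degreeOf_C_mul_le _ _ _).trans ?_
  simp only [mvPolynomialX_apply]
  rw [prod_congr rfl fun k _ => (pow_one (X (τ k, k))).symm]
  refine (degreeOf_prod_X_pow_le _ _ _ _).trans ?_
  rw [sum_const, smul_eq_mul, mul_one]
  exact card_le_one.mpr fun k hk k' hk' => by
    simp only [mem_filter] at hk hk'
    exact congrArg Prod.snd (hk.2.trans hk'.2.symm)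

theorem xi_mvPolynomialX (p n : ℕ) [Fact p.Prime] :
    xi p n (mvPolynomialX (Fin n) (Fin n) (ZMod p))
      = (mvPolynomialX (Fin n) (Fin n) (ZMod p)).det ^ (p - 1) := by
  refine eq_of_eval_eq_of_degreeOf_le (by simpa [ZMod.card] using degreeOf_xi_mvPolynomialX_le)
    (fun i => ?_) fun v => ?_
  · calc _ ≤ (p - 1) * degreeOf i (mvPolynomialX (Fin n) (Fin n) (ZMod p)).det :=
          degreeOf_pow_le _ _ _
      _ ≤ Fintype.card (ZMod p) - 1 := by
          simpa [ZMod.card] using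
            Nat.mul_le_mul_left (p - 1) (degreeOf_det_mvPolynomialX_le_one i)
  · rw [(eval v).map_xi, map_pow, RingHom.map_det, RingHom.mapMatrix_apply,
      xi_zmod_eq_det_pow]

/-- For a prime `p` and a matrix `μ` over a commutative ring of characteristic `p`,
`ξ(μ) = (det μ) ^ (p - 1)`. -/
theorem xi_eq_det_pow (p : ℕ) (hp : p.Prime) (R : Type*) [CommRing R] [CharP R p]
    (n : ℕ) (μ : Matrix (Fin n) (Fin n) R) :
    xi p n μ = μ.det ^ (p - 1) := by
  have := Fact.mk hp
  have key := congrArg (eval₂Hom (ZMod.castHom dvd_rfl R) fun q => μ q.1 q.2)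
    (xi_mvPolynomialX p n)
  rwa [RingHom.map_xi, map_pow, RingHom.map_det, RingHom.mapMatrix_apply, coe_eval₂Hom,
    mvPolynomialX_map_eval₂] at key
end

section
/- Let p be a prime, R a commutative ring with CharP R p, n : ℕ, and μ : Matrix (Fin n) (Fin n) R. In MvPolynomial (Fin n) R, the coefficient of the monomial ∏_l (X l)^(p−1) (i.e., the coefficient at the finitely supported exponent function sending every l to p−1) in the product ∏_{k} (∑_l MvPolynomial.C (μ l k) * X l)^(p−1) equals (det μ)^(p−1). -/
/-!
Over a finite field `K` with `q` elements, `∑_{t ∈ K} t ^ e` is `-1` when `e` is a positive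
multiple of `q - 1` and `0` otherwise. Hence summing a polynomial of total degree at most
`n (q - 1)` over all points of `Kⁿ` extracts `(-1)ⁿ` times its coefficient at `∏ Xᵢ ^ (q - 1)`,
and the theorem becomes `∑ₓ ∏ₖ (μ x)ₖ ^ (q - 1) = (-1)ⁿ (det μ) ^ (q - 1)`. For `μ` over `K`
this is direct: if `μ` is invertible, substitute `y = μ x`; otherwise every nonempty fibre of
`x ↦ μ x` has the cardinality of the kernel, a positive power of `q`, so the sum vanishes.
For the generic matrix both sides are polynomials of degree at most `q - 1` in each entry
which agree at every `K`-point, hence are equal; specialising the generic matrix gives the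
identity over every `K`-algebra, in particular over every ring of characteristic `p`
with `K = ZMod p`.
-/

open MvPolynomial Finset Matrix

theorem AddMonoidHom.sum_comp_eq_zero_of_card_ker {G H R : Type*} [AddGroup G] [Fintype G]
    [AddMonoid H] [NonAssocSemiring R] (φ : G →+ H) (g : H → R)
    (h : (Nat.card {x // φ x = 0} : R) = 0) : ∑ x, g (φ x) = 0 := by
  classical
  rw [sum_comp]
  refine sum_eq_zero fun y hy => ?_
  obtain ⟨x, -, rfl⟩ := mem_image.mp hy
  rw [AddMonoidHom.card_fiber_eq_of_mem_range φ ⟨x, rfl⟩ ⟨0, φ.map_zero⟩, nsmul_eq_mul,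
    ← Fintype.card_subtype, ← Nat.card_eq_fintype_card, h, zero_mul]

theorem Finset.sum_map_prodMk_univ_val {ι : Type*} [Fintype ι] [DecidableEq ι] :
    ∑ k : ι, (univ : Finset ι).val.map (Prod.mk k) = (univ : Finset (ι × ι)).val := by
  rw [← univ_product_univ, product_val, sum_eq_multiset_sum]
  rfl

namespace Matrix

variable {ι R : Type*} [Fintype ι] [DecidableEq ι]

theorem degrees_mvPolynomialX_mulVec_le [CommSemiring R] (w : ι → R) (k : ι) :
    ((mvPolynomialX ι ι R *ᵥ fun i => C (w i)) k).degrees ≤ univ.val.map (Prod.mk k) := by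
  refine (degrees_sum_le _ _).trans (Finset.sup_le fun l _ => degrees_mul_le.trans ?_)
  rw [degrees_C, add_zero]
  exact (degrees_X' _).trans (Multiset.singleton_le.mpr (Multiset.mem_map_of_mem _ (mem_univ l)))

theorem degrees_det_mvPolynomialX_le [CommRing R] :
    (det (mvPolynomialX ι ι R)).degrees ≤ (univ : Finset (ι × ι)).val := by
  rw [← mem_degreesLE, det_apply]
  refine Submodule.sum_mem _ fun σ _ => ?_
  rw [Units.smul_def]
  refine zsmul_mem ?_ _
  rw [mem_degreesLE, ← sum_map_prodMk_univ_val, ← Equiv.sum_comp σ]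
  refine degrees_prod_le.trans (sum_le_sum fun i _ => (degrees_X' _).trans ?_)
  exact Multiset.singleton_le.mpr (Multiset.mem_map_of_mem _ (mem_univ i))

end Matrix

theorem MvPolynomial.isHomogeneous_prod_sum_C_mul_X_pow {ι R : Type*} [Fintype ι] [CommSemiring R]
    (μ : Matrix ι ι R) (e : ℕ) :
    (∏ k, (∑ l, C (μ k l) * X l : MvPolynomial ι R) ^ e).IsHomogeneous (Fintype.card ι * e) := by
  have hlinear : ∀ k, (∑ l, C (μ k l) * X l : MvPolynomial ι R).IsHomogeneous 1 := fun k =>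
    IsHomogeneous.sum univ _ 1 fun l _ => isHomogeneous_C_mul_X (μ k l) l
  simpa using IsHomogeneous.prod univ _ (fun _ => e) fun k _ => by
    simpa using (hlinear k).pow e

theorem MvPolynomial.degreesLE_nsmul_univ_le_restrictDegree {σ R : Type*} [Fintype σ]
    [CommSemiring R] (e : ℕ) : degreesLE R σ (e • univ.val) ≤ restrictDegree σ R e := by
  classical
  intro p hp
  rw [mem_restrictDegree_iff_sup]
  intro i
  simpa using Multiset.count_le_of_le i hp

universe u

section FiniteField

variable {K : Type u} [Field K] [Fintype K]

local notation "q" => Fintype.card K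

theorem FiniteField.sum_pow (e : ℕ) : ∑ x : K, x ^ e = if e ≠ 0 ∧ q - 1 ∣ e then -1 else 0 := by
  classical
  rcases eq_or_ne e 0 with rfl | he
  · simp
  have hzero : ∑ x : {a : K // ¬a ≠ 0}, (x : K) ^ e = 0 :=
    Fintype.sum_eq_zero _ fun x => by simp [not_not.mp x.2, he]
  have : ∑ x : K, x ^ e = ∑ u : Kˣ, (u : K) ^ e := by
    rw [← Fintype.sum_subtype_add_sum_subtype (· ≠ 0), hzero, add_zero]
    exact Fintype.sum_equiv unitsEquivNeZero.symm _ _ fun _ => rfl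
  rw [this, sum_pow_units]
  simp [he]

theorem FiniteField.prod_sum_pow_eq_ite {σ : Type*} [Fintype σ] (d : σ →₀ ℕ)
    (hd : ∑ i, d i ≤ Fintype.card σ * (q - 1)) :
    ∏ i, ∑ x : K, x ^ d i =
      if d = Finsupp.equivFunOnFinite.symm (fun _ => q - 1) then (-1) ^ Fintype.card σ else 0 := by
  have hq : q - 1 ≠ 0 := Nat.sub_ne_zero_of_lt Fintype.one_lt_card
  simp_rw [sum_pow]
  split_ifs with hdm
  · simp [hdm, hq]
  rw [prod_eq_zero_iff]
  by_contra! hne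
  apply hdm
  have hdiv : ∀ i, d i ≠ 0 ∧ q - 1 ∣ d i := fun i => by
    by_contra h
    exact hne i (mem_univ i) (if_neg h)
  have hle : ∀ i ∈ univ, q - 1 ≤ d i := fun i _ =>
    Nat.le_of_dvd (Nat.pos_of_ne_zero (hdiv i).1) (hdiv i).2
  have hsum : ∑ _i : σ, (q - 1) = ∑ i, d i :=
    le_antisymm (sum_le_sum hle) (by simpa [mul_comm] using hd)
  ext i
  exact ((sum_eq_sum_iff_of_le hle).mp hsum i (mem_univ i)).symm

theorem FiniteField.sum_eval_eq_neg_one_pow_mul_coeff {σ A : Type*} [Fintype σ] [DecidableEq σ]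
    [CommRing A] [Algebra K A] (f : MvPolynomial σ A)
    (hf : f.totalDegree ≤ Fintype.card σ * (q - 1)) :
    ∑ x : σ → K, eval (fun i => algebraMap K A (x i)) f =
      (-1) ^ Fintype.card σ * coeff (Finsupp.equivFunOnFinite.symm fun _ => q - 1) f := by
  set m : σ →₀ ℕ := Finsupp.equivFunOnFinite.symm fun _ => q - 1
  have hmonomial : ∀ d ∈ f.support, ∑ x : σ → K, ∏ i, algebraMap K A (x i) ^ d i =
      if d = m then (-1) ^ Fintype.card σ else 0 := by
    intro d hd
    have hdeg : ∑ i, d i ≤ Fintype.card σ * (q - 1) :=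
      le_trans (by rw [Finsupp.sum_fintype]; simp) ((le_totalDegree hd).trans hf)
    have := congrArg (algebraMap K A) (prod_sum_pow_eq_ite d hdeg)
    simp only [map_prod, map_sum, map_pow, Fintype.prod_sum] at this
    simpa [apply_ite (algebraMap K A)] using this
  calc ∑ x : σ → K, eval (fun i => algebraMap K A (x i)) f
      = ∑ d ∈ f.support, coeff d f * ∑ x : σ → K, ∏ i, algebraMap K A (x i) ^ d i := by
        simp_rw [eval_eq', mul_sum]
        exact sum_comm
    _ = ∑ d ∈ f.support, if d = m then coeff d f * (-1) ^ Fintype.card σ else 0 :=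
        sum_congr rfl fun d hd => by rw [hmonomial d hd, mul_ite, mul_zero]
    _ = (-1) ^ Fintype.card σ * coeff m f := by
        rw [sum_ite_eq', mul_comm]
        split_ifs with hm
        · rfl
        · rw [notMem_support_iff.mp hm, mul_zero]

theorem Matrix.cast_card_mulVec_eq_zero {ι : Type*} [Fintype ι] [DecidableEq ι] {μ : Matrix ι ι K}
    (hμ : μ.det = 0) :
    (Nat.card {x // μ *ᵥ x = 0} : K) = 0 := by
  obtain ⟨x₀, hx₀, hx₀μ⟩ := exists_mulVec_eq_zero_iff.mpr hμ
  have hrank : Module.finrank K (LinearMap.ker μ.mulVecLin) ≠ 0 :=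
    (Module.finrank_pos_iff_exists_ne_zero.mpr
      ⟨⟨x₀, hx₀μ⟩, fun h => hx₀ (congrArg Subtype.val h)⟩).ne'
  change (Nat.card (LinearMap.ker μ.mulVecLin) : K) = 0
  rw [Module.natCard_eq_pow_finrank (K := K), Nat.cast_pow, Nat.card_eq_fintype_card,
    FiniteField.cast_card_eq_zero, zero_pow hrank]

theorem Matrix.sum_prod_mulVec_pow {ι : Type*} [Fintype ι] [DecidableEq ι] (μ : Matrix ι ι K) :
    ∑ x : ι → K, ∏ k, (μ *ᵥ x) k ^ (q - 1) =
      (-1) ^ Fintype.card ι * μ.det ^ (q - 1) := by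
  have hq : q - 1 ≠ 0 := Nat.sub_ne_zero_of_lt Fintype.one_lt_card
  by_cases hμ : μ.det = 0
  · rw [hμ, zero_pow hq, mul_zero]
    exact μ.mulVecLin.toAddMonoidHom.sum_comp_eq_zero_of_card_ker
      (fun y => ∏ k, y k ^ (q - 1)) (cast_card_mulVec_eq_zero hμ)
  · have hbij : Function.Bijective (μ *ᵥ ·) :=
      ⟨mulVec_injective_iff_isUnit.mpr ((isUnit_iff_isUnit_det μ).mpr (Ne.isUnit hμ)),
        mulVec_surjective_iff_isUnit.mpr ((isUnit_iff_isUnit_det μ).mpr (Ne.isUnit hμ))⟩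
    rw [hbij.sum_comp (fun y => ∏ k, y k ^ (q - 1)),
      ← Fintype.prod_sum fun (_ : ι) (t : K) => t ^ (q - 1),
      FiniteField.pow_card_sub_one_eq_one _ hμ, mul_one, FiniteField.sum_pow]
    simp [hq]

-- `ι` shares the universe of `K` because `MvPolynomial.eq_zero_of_eval_eq_zero` demands it.
theorem Matrix.sum_prod_mvPolynomialX_mulVec_pow {ι : Type u} [Fintype ι] [DecidableEq ι] :
    ∑ x : ι → K, ∏ k, (mvPolynomialX ι ι K *ᵥ fun i => C (x i)) k ^ (q - 1) =
      (-1) ^ Fintype.card ι * det (mvPolynomialX ι ι K) ^ (q - 1) := by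
  set e := q - 1
  rw [← sub_eq_zero]
  refine eq_zero_of_eval_eq_zero _ _ _ (fun v => ?_)
    (degreesLE_nsmul_univ_le_restrictDegree e (sub_mem ?_ ?_))
  · have hY : (mvPolynomialX ι ι K).map (eval v) = of fun i j => v (i, j) := by
      ext i j
      simp
    rw [map_sub, map_mul, map_pow, map_pow, map_neg, map_one, eval_det_mvPolynomialX, map_sum]
    simp only [map_prod, map_pow, RingHom.map_mulVec, hY, Function.comp_def, eval_C]
    exact sub_eq_zero.mpr (sum_prod_mulVec_pow _)
  · refine Submodule.sum_mem _ fun x _ => ?_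
    rw [mem_degreesLE, ← sum_map_prodMk_univ_val, smul_sum]
    exact degrees_prod_le.trans (sum_le_sum fun k _ => degrees_pow_le.trans
      (nsmul_le_nsmul_right (degrees_mvPolynomialX_mulVec_le _ k) e))
  · rw [mem_degreesLE, ← map_one C, ← map_neg, ← map_pow]
    refine degrees_mul_le.trans ?_
    rw [degrees_C, zero_add]
    exact degrees_pow_le.trans (nsmul_le_nsmul_right degrees_det_mvPolynomialX_le e)

theorem Matrix.sum_prod_mulVec_algebraMap_pow {ι : Type u} [Fintype ι] [DecidableEq ι] {R : Type*}
    [CommRing R] [Algebra K R] (μ : Matrix ι ι R) :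
    ∑ x : ι → K, ∏ k, (μ *ᵥ fun i => algebraMap K R (x i)) k ^ (q - 1) =
      (-1) ^ Fintype.card ι * μ.det ^ (q - 1) := by
  have := congrArg (aeval fun p : ι × ι => μ p.1 p.2)
    (sum_prod_mvPolynomialX_mulVec_pow (ι := ι) (K := K))
  have hmulVec : ∀ (x : ι → K) k, aeval (fun p : ι × ι => μ p.1 p.2)
      ((mvPolynomialX ι ι K *ᵥ fun i => C (x i)) k) = (μ *ᵥ fun i => algebraMap K R (x i)) k := by
    simp [mulVec, dotProduct]
  simpa only [map_sum, map_prod, map_pow, map_mul, map_neg, map_one, AlgHom.map_det,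
    mvPolynomialX_mapMatrix_aeval, hmulVec] using this

theorem MvPolynomial.coeff_prod_sum_C_mul_X_pow_eq_det_pow {ι : Type u} [Fintype ι] [DecidableEq ι]
    {R : Type*} [CommRing R] [Algebra K R] (μ : Matrix ι ι R) :
    coeff (Finsupp.equivFunOnFinite.symm fun _ => q - 1)
        (∏ k, (∑ l, C (μ k l) * X l) ^ (q - 1)) =
      μ.det ^ (q - 1) := by
  have h := FiniteField.sum_eval_eq_neg_one_pow_mul_coeff (K := K) _
    (isHomogeneous_prod_sum_C_mul_X_pow μ (q - 1)).totalDegree_le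
  simp only [map_prod, map_pow, map_sum, map_mul, eval_C, eval_X] at h
  exact (isUnit_neg_one.pow _).mul_left_cancel (h.symm.trans (sum_prod_mulVec_algebraMap_pow μ))

end FiniteField

/-- For a prime `p` and a matrix `μ` over a commutative ring of characteristic `p`, the
coefficient of the monomial `∏ l, (X l) ^ (p - 1)` in `∏ k, (∑ l, C (μ l k) * X l) ^ (p - 1)`
equals `(det μ) ^ (p - 1)`. -/
theorem coeff_prod_linear_forms_pow (p : ℕ) (hp : p.Prime) (R : Type*) [CommRing R]
    [CharP R p] (n : ℕ) (μ : Matrix (Fin n) (Fin n) R) :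
    MvPolynomial.coeff (Finsupp.equivFunOnFinite.symm fun _ : Fin n => p - 1)
        (∏ k : Fin n, (∑ l : Fin n, MvPolynomial.C (μ l k) * MvPolynomial.X l) ^ (p - 1))
      = μ.det ^ (p - 1) := by
  have : Fact p.Prime := ⟨hp⟩
  let : Algebra (ZMod p) R := ZMod.algebra R p
  have key := coeff_prod_sum_C_mul_X_pow_eq_det_pow (K := ZMod p) μ.transpose
  rwa [ZMod.card, det_transpose] at key
end

section
/- Let R be a commutative ring, n d : ℕ, and μ : Matrix (Fin n) (Fin n) R. In MvPolynomial (Fin n) R, the coefficient of the monomial ∏_l (X l)^d in ∏_{k} (∑_l MvPolynomial.C (μ l k) * X l)^d equals the sum, over all functions a : Fin n → Fin n → ℕ satisfying (∀ k, ∑_l a k l = d) and (∀ l, ∑_k a k l = d), of ((∏_k Nat.multinomial Finset.univ (fun l => a l k) : ℕ) : R) * ∏_k ∏_l (μ l k)^(a l k). -/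
/-!
Expanding each factor `(∑ l, C (μ l k) * X l) ^ d` by the multinomial theorem and multiplying
out, the product becomes a sum over exponent matrices `G` whose row `G k` is the exponent vector
chosen in the `k`-th factor (so every row sums to `d`); the term of `G` is a monomial whose
exponent is the vector of column sums of `G`. The coefficient of `∏ l, X l ^ d` therefore collects
the `G` whose rows and columns all sum to `d`, and `a = Gᵀ` is the indexing of the statement.
-/

open MvPolynomial Finset

section
variable {R σ ι : Type*} [CommSemiring R] [Fintype σ]

theorem prod_C_mul_X_pow_eq_monomial (c : σ → R) (g : σ → ℕ) :
    ∏ l, (C (c l) * X l) ^ g l = monomial (Finsupp.equivFunOnFinite.symm g) (∏ l, c l ^ g l) := by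
  rw [monomial_eq, Finsupp.prod_fintype _ _ (fun _ => pow_zero _)]
  simp only [mul_pow, prod_mul_distrib, map_prod, map_pow, Finsupp.coe_equivFunOnFinite_symm]

theorem sum_C_mul_X_pow_eq_sum_monomial [DecidableEq σ] (c : σ → R) (d : ℕ) :
    (∑ l, C (c l) * X l) ^ d = ∑ g ∈ piAntidiag univ d,
      monomial (Finsupp.equivFunOnFinite.symm g) (Nat.multinomial univ g * ∏ l, c l ^ g l) := by
  rw [sum_pow_eq_sum_piAntidiag]
  refine sum_congr rfl fun g _ => ?_
  rw [prod_C_mul_X_pow_eq_monomial, ← C_mul_monomial, ← C_eq_coe_nat, map_natCast]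

theorem coeff_prod_monomial_equivFunOnFinite (s : Finset ι) (g : ι → σ → ℕ) (a : ι → R)
    (m : σ → ℕ) :
    coeff (Finsupp.equivFunOnFinite.symm m)
        (∏ k ∈ s, monomial (Finsupp.equivFunOnFinite.symm (g k)) (a k)) =
      if ∑ k ∈ s, g k = m then ∏ k ∈ s, a k else 0 := by
  classical
  have hsum : ∑ k ∈ s, Finsupp.equivFunOnFinite.symm (g k) =
      Finsupp.equivFunOnFinite.symm (∑ k ∈ s, g k) :=
    (map_sum (Finsupp.linearEquivFunOnFinite ℕ ℕ σ).symm g s).symm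
  rw [← monomial_sum_prod, hsum, coeff_monomial]
  simp only [Equiv.apply_eq_iff_eq]
end

section
variable {ι σ : Type*} [Fintype ι] [DecidableEq ι] [Fintype σ] [DecidableEq σ] {d : ℕ}

theorem mem_piFinset_piAntidiag_univ_iff {G : ι → σ → ℕ} :
    G ∈ Fintype.piFinset (fun _ => piAntidiag univ d) ↔ ∀ k, ∑ l, G k l = d := by
  simp [Fintype.mem_piFinset, mem_piAntidiag]

theorem mem_piFinset_range_of_sum_eq {G : ι → σ → ℕ} (hG : ∀ k, ∑ l, G k l = d) :
    G ∈ Fintype.piFinset fun _ => Fintype.piFinset fun _ => range (d + 1) := by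
  simp only [Fintype.mem_piFinset, mem_range, Nat.lt_succ_iff]
  intro k l
  exact hG k ▸ single_le_sum (fun _ _ => Nat.zero_le _) (mem_univ l)
end

/-- Over any commutative ring `R`, the coefficient of the monomial `∏ l, (X l) ^ d` in
`∏ k, (∑ l, C (μ l k) * X l) ^ d` equals the sum, over all `a : Fin n → Fin n → ℕ` whose
every row sum and every column sum equals `d` (all such `a` have entries `≤ d`, so the
index set below captures exactly these), of
`(∏ k, multinomial (fun l => a l k)) * ∏ k, ∏ l, (μ l k) ^ (a l k)`. -/
theorem coeff_prod_linear_forms_pow_eq_sum (R : Type*) [CommRing R] (n d : ℕ)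
    (μ : Matrix (Fin n) (Fin n) R) :
    MvPolynomial.coeff (Finsupp.equivFunOnFinite.symm fun _ : Fin n => d)
        (∏ k : Fin n, (∑ l : Fin n, MvPolynomial.C (μ l k) * MvPolynomial.X l) ^ d)
      = ∑ a ∈ Finset.filter
            (fun a : Fin n → Fin n → ℕ =>
              (∀ k, ∑ l, a k l = d) ∧ (∀ l, ∑ k, a k l = d))
            (Fintype.piFinset fun _ => Fintype.piFinset fun _ => Finset.range (d + 1)),
          ((∏ k, Nat.multinomial Finset.univ (fun l => a l k) : ℕ) : R) *
            ∏ k, ∏ l, (μ l k) ^ (a l k) := by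
  simp_rw [sum_C_mul_X_pow_eq_sum_monomial, prod_univ_sum, coeff_sum,
    coeff_prod_monomial_equivFunOnFinite, ← sum_filter, prod_mul_distrib, Nat.cast_prod]
  refine sum_nbij' (fun G l k => G k l) (fun a k l => a l k) ?_ ?_ (fun _ _ => rfl)
    (fun _ _ => rfl) (fun _ _ => rfl)
  · intro G hG
    simp only [mem_filter, mem_piFinset_piAntidiag_univ_iff, _root_.funext_iff,
      Finset.sum_apply] at hG ⊢
    exact ⟨mem_piFinset_range_of_sum_eq hG.2, hG.2, hG.1⟩
  · intro a ha
    simp only [mem_filter, mem_piFinset_piAntidiag_univ_iff, _root_.funext_iff,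
      Finset.sum_apply] at ha ⊢
    exact ⟨ha.2.2, ha.2.1⟩
end

section
/- Let p be a prime, n : ℕ, and a : Fin n → Fin n → ℕ a function satisfying (∀ k, ∑_l a k l = p−1) and (∀ l, ∑_k a k l = p−1). Then in ZMod p: ((∏_k Nat.multinomial Finset.univ (fun l => a k l) : ℕ) : ZMod p) equals the sum, over all functions b : Equiv.Perm (Fin n) → ℕ satisfying ∑_σ b σ = p−1 and (∀ k l, ∑_{σ ∈ {σ ∣ σ k = l}} b σ = a k l), of ((Nat.multinomial Finset.univ b : ℕ) : ZMod p) * ∏_σ (((Equiv.Perm.sign σ : ℤ) : ZMod p))^(b σ). -/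
/-!
Over a finite field `K` with `q` elements, `∑_{τ ∈ K^ι} ∏_k (M τ)_k ^ (q-1) = (-1)^|ι| det(M)^(q-1)`
for every square matrix `M`: if `M` is invertible, `τ ↦ M τ` permutes `K^ι` and `∑_x x^(q-1) = -1`;
otherwise every fibre of `τ ↦ M τ` is empty or a coset of the nonzero kernel, whose cardinality
`q^d` vanishes in `K`. For the generic matrix `X = (X_kl)` both sides are polynomials of degree
`≤ q-1` in each variable, so the identity holds in `K[X_kl]`. Now compare coefficients of
`∏ X_kl ^ a_kl`: expanding each row `(∑_l τ_l X_kl)^(q-1)` by the multinomial theorem gives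
`∏_k multinomial(a_k) ∏_l τ_l^(q-1)` (the column sums are `q-1`), which sums over `τ` to
`(-1)^|ι| ∏_k multinomial(a_k)`, while expanding `(∑_σ sign σ ∏_k X_{k,σ k})^(q-1)` gives
`(-1)^|ι|` times the signed sum over `b`.
-/

open Finset MvPolynomial Matrix

universe u

section FiniteField

variable {K : Type*} [Field K] [Fintype K]

local notation "q" => Fintype.card K

theorem FiniteField.sum_pow_card_sub_one_s5 : ∑ x : K, x ^ (q - 1) = -1 := by
  classical
  have hq : q - 1 ≠ 0 := by have := Fintype.one_lt_card (α := K); omega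
  rw [← Finset.sum_erase_add _ _ (mem_univ 0), zero_pow hq, add_zero,
    Finset.sum_congr rfl fun x hx => FiniteField.pow_card_sub_one_eq_one x (ne_of_mem_erase hx),
    sum_const, card_erase_of_mem (mem_univ 0), card_univ, nsmul_one,
    Nat.cast_sub Fintype.card_pos, FiniteField.cast_card_eq_zero, Nat.cast_one, zero_sub]

theorem FiniteField.sum_prod_pow_card_sub_one (ι : Type*) [Fintype ι] [DecidableEq ι] :
    ∑ y : ι → K, ∏ i, y i ^ (q - 1) = (-1) ^ Fintype.card ι := by
  rw [← Fintype.prod_sum (fun _ x => x ^ (q - 1)), prod_const, sum_pow_card_sub_one_s5, card_univ]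

theorem LinearMap.natCast_card_ker_eq_zero {V W : Type*} [AddCommGroup V] [Module K V]
    [Fintype V] [AddCommGroup W] [Module K W] (f : V →ₗ[K] W)
    (hf : LinearMap.ker f ≠ ⊥) : (Nat.card (LinearMap.ker f) : K) = 0 := by
  have : 0 < Module.finrank K (LinearMap.ker f) :=
    Module.finrank_pos_iff.2 (Submodule.nontrivial_iff_ne_bot.2 hf)
  rw [Module.natCard_eq_pow_finrank (K := K), Nat.cast_pow, Nat.card_eq_fintype_card,
    FiniteField.cast_card_eq_zero, zero_pow this.ne']

theorem LinearMap.sum_comp_eq_zero_of_ker_ne_bot {V W : Type*} [AddCommGroup V] [Module K V]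
    [Fintype V] [AddCommGroup W] [Module K W] [DecidableEq W] (f : V →ₗ[K] W)
    (hf : LinearMap.ker f ≠ ⊥) (g : W → K) : ∑ v, g (f v) = 0 := by
  have hker : #{v | f v = 0} = Nat.card (LinearMap.ker f) := by
    rw [← Fintype.card_subtype, ← Nat.card_eq_fintype_card]; rfl
  rw [sum_comp]
  refine sum_eq_zero fun w hw => ?_
  obtain ⟨v, -, rfl⟩ := mem_image.1 hw
  rw [AddMonoidHom.card_fiber_eq_of_mem_range f ⟨v, rfl⟩ ⟨0, map_zero f⟩, hker, nsmul_eq_mul,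
    f.natCast_card_ker_eq_zero hf, zero_mul]

theorem Matrix.sum_prod_mulVec_pow_card_sub_one {ι : Type*} [Fintype ι] [DecidableEq ι]
    (M : Matrix ι ι K) :
    ∑ τ : ι → K, ∏ k, (M *ᵥ τ) k ^ (q - 1) = (-1) ^ Fintype.card ι * M.det ^ (q - 1) := by
  classical
  by_cases hM : M.det = 0
  · have hker : LinearMap.ker M.mulVecLin ≠ ⊥ := by
      obtain ⟨v, hv, hMv⟩ := Matrix.exists_mulVec_eq_zero_iff.2 hM
      exact (Submodule.ne_bot_iff _).2 ⟨v, hMv, hv⟩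
    rw [hM, zero_pow (by have := Fintype.one_lt_card (α := K); omega), mul_zero]
    exact M.mulVecLin.sum_comp_eq_zero_of_ker_ne_bot hker fun y => ∏ k, y k ^ (q - 1)
  · have hunit : IsUnit M := (M.isUnit_iff_isUnit_det).2 (Ne.isUnit hM)
    have hbij : Function.Bijective M.mulVec :=
      ⟨mulVec_injective_iff_isUnit.2 hunit, mulVec_surjective_iff_isUnit.2 hunit⟩
    rw [Fintype.sum_bijective _ hbij _ (fun y => ∏ k, y k ^ (q - 1)) fun _ => rfl,
      FiniteField.sum_prod_pow_card_sub_one, FiniteField.pow_card_sub_one_eq_one _ hM, mul_one]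

end FiniteField

namespace MvPolynomial

variable {R σ ι : Type*} [CommSemiring R]

theorem sum_monomial_pow [DecidableEq ι] (s : Finset ι) (e : ι → σ →₀ ℕ) (c : ι → R) (m : ℕ) :
    (∑ j ∈ s, monomial (e j) (c j)) ^ m =
      ∑ b ∈ s.piAntidiag m,
        monomial (∑ j ∈ s, b j • e j) (Nat.multinomial s b * ∏ j ∈ s, c j ^ b j) := by
  rw [sum_pow_eq_sum_piAntidiag]
  refine sum_congr rfl fun b _ => ?_
  simp_rw [monomial_pow, ← monomial_sum_prod, ← map_natCast C, C_mul_monomial]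

theorem coeff_sum_monomial [DecidableEq σ] (s : Finset ι) (e : ι → σ →₀ ℕ) (w : ι → R)
    (d : σ →₀ ℕ) : coeff d (∑ j ∈ s, monomial (e j) (w j)) = ∑ j ∈ s with e j = d, w j := by
  simp only [coeff_sum, coeff_monomial, sum_filter]

theorem sum_monomial_mem_restrictDegree (s : Finset ι) (e : ι → σ →₀ ℕ) (w : ι → R) {m : ℕ}
    (he : ∀ j ∈ s, ∀ i, e j i ≤ m) :
    ∑ j ∈ s, monomial (e j) (w j) ∈ restrictDegree σ R m := by
  refine Submodule.sum_mem _ fun j hj => (mem_restrictDegree _ _ _).2 fun d hd i => ?_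
  rw [mem_singleton.1 (support_monomial_subset hd)]
  exact he j hj i

end MvPolynomial

theorem Finsupp.sum_sum_smul_single_apply {ι : Type*} [Fintype ι] [DecidableEq ι]
    (c : ι → ι → ℕ) (k l : ι) : (∑ i, ∑ j, c i j • Finsupp.single (i, j) 1) (k, l) = c k l := by
  simp [Finsupp.finsetSum_apply, Finsupp.single_apply, Prod.ext_iff, ite_and]

theorem Finsupp.sum_smul_sum_single_perm_apply {ι : Type*} [Fintype ι] [DecidableEq ι]
    (b : Equiv.Perm ι → ℕ) (k l : ι) :
    (∑ σ, b σ • ∑ i, Finsupp.single (i, σ i) 1) (k, l) = ∑ σ ∈ univ with σ k = l, b σ := by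
  simp [Finsupp.finsetSum_apply, Finsupp.single_apply, Prod.ext_iff, sum_filter, ite_and]

namespace Matrix

variable {R ι : Type*} [CommRing R] [Fintype ι] [DecidableEq ι]

theorem prod_mvPolynomialX_mulVec_pow (τ : ι → R) (m : ℕ) :
    ∏ k, (mvPolynomialX ι ι R *ᵥ fun l => C (τ l)) k ^ m =
      ∑ c ∈ Fintype.piFinset fun _ => univ.piAntidiag m,
        monomial (∑ k, ∑ l, c k l • Finsupp.single (k, l) 1)
          (∏ k, (Nat.multinomial univ (c k) * ∏ l, τ l ^ c k l)) := by
  have hrow : ∀ k, (mvPolynomialX ι ι R *ᵥ fun l => C (τ l)) k =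
      ∑ l, monomial (Finsupp.single (k, l) 1) (τ l) := fun k => by
    simp only [mulVec, dotProduct, mvPolynomialX_apply, mul_comm (X _), C_mul_X_eq_monomial]
  simp_rw [hrow, sum_monomial_pow, prod_univ_sum, ← monomial_sum_prod]

theorem det_mvPolynomialX_pow (m : ℕ) :
    det (mvPolynomialX ι ι R) ^ m =
      ∑ b ∈ univ.piAntidiag m,
        monomial (∑ σ : Equiv.Perm ι, b σ • ∑ k, Finsupp.single (k, σ k) 1)
          (Nat.multinomial univ b * ∏ σ, ((Equiv.Perm.sign σ : ℤ) : R) ^ b σ) := by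
  have hdet : det (mvPolynomialX ι ι R) = ∑ σ : Equiv.Perm ι,
      monomial (∑ k, Finsupp.single (k, σ k) 1) ((Equiv.Perm.sign σ : ℤ) : R) := by
    rw [← det_transpose, det_apply']
    refine sum_congr rfl fun σ _ => ?_
    rw [monomial_sum_index, map_intCast]
    rfl
  rw [hdet, sum_monomial_pow]

end Matrix

section FiniteField

-- One universe for `K` and `ι`, as `MvPolynomial.eq_zero_of_eval_eq_zero` demands.
variable (K : Type u) [Field K] [Fintype K] (ι : Type u) [Fintype ι] [DecidableEq ι]

local notation "q" => Fintype.card K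

theorem Matrix.sum_prod_mvPolynomialX_mulVec_pow_card_sub_one :
    ∑ τ : ι → K, ∏ k, (mvPolynomialX ι ι K *ᵥ fun l => C (τ l)) k ^ (q - 1) =
      (-1) ^ Fintype.card ι * det (mvPolynomialX ι ι K) ^ (q - 1) := by
  rw [← sub_eq_zero]
  refine eq_zero_of_eval_eq_zero _ _ _ (fun v => ?_)
    (Submodule.sub_mem _ (Submodule.sum_mem _ fun τ _ => ?_) ?_)
  · rw [map_sub, sub_eq_zero, map_mul, map_sum, map_pow, map_pow, map_neg, map_one,
      eval_det_mvPolynomialX]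
    have hX : (mvPolynomialX ι ι K).map (eval v) = of fun i j => v (i, j) :=
      Matrix.ext fun i j => eval_X _
    simp_rw [map_prod, map_pow, RingHom.map_mulVec, hX, Function.comp_def, eval_C]
    exact sum_prod_mulVec_pow_card_sub_one _
  · rw [prod_mvPolynomialX_mulVec_pow]
    refine sum_monomial_mem_restrictDegree _ _ _ fun c hc ⟨k, l⟩ => ?_
    rw [Finsupp.sum_sum_smul_single_apply, ← (mem_piAntidiag.1 (Fintype.mem_piFinset.1 hc k)).1]
    exact single_le_sum (fun _ _ => Nat.zero_le _) (mem_univ l)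
  · rw [det_mvPolynomialX_pow, ← map_one C, ← map_neg C, ← map_pow, C_mul', smul_sum]
    simp_rw [smul_monomial]
    refine sum_monomial_mem_restrictDegree _ _ _ fun b hb ⟨k, l⟩ => ?_
    rw [Finsupp.sum_smul_sum_single_perm_apply, ← (mem_piAntidiag.1 hb).1]
    exact sum_le_sum_of_subset (filter_subset _ _)

theorem FiniteField.prod_multinomial_eq_sum_sign (a : ι → ι → ℕ) (ha1 : ∀ k, ∑ l, a k l = q - 1)
    (ha2 : ∀ l, ∑ k, a k l = q - 1) :
    ∏ k, (Nat.multinomial univ (a k) : K) =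
      ∑ b ∈ univ.piAntidiag (q - 1) with ∀ k l, ∑ σ ∈ univ with σ k = l, b σ = a k l,
        Nat.multinomial univ b * ∏ σ : Equiv.Perm ι, ((Equiv.Perm.sign σ : ℤ) : K) ^ b σ := by
  set d : ι × ι →₀ ℕ := ∑ k, ∑ l, a k l • Finsupp.single (k, l) 1
  have hd : ∀ c : ι → ι → ℕ, ∑ k, ∑ l, c k l • Finsupp.single (k, l) 1 = d ↔ c = a := by
    refine fun c => ⟨fun h => funext₂ fun k l => ?_, fun h => h ▸ rfl⟩
    rw [← Finsupp.sum_sum_smul_single_apply c, h, Finsupp.sum_sum_smul_single_apply]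
  have hτ : ∀ τ : ι → K,
      coeff d (∏ k, (mvPolynomialX ι ι K *ᵥ fun l => C (τ l)) k ^ (q - 1)) =
        (∏ k, (Nat.multinomial univ (a k) : K)) * ∏ l, τ l ^ (q - 1) := fun τ => by
    have ha : a ∈ Fintype.piFinset fun _ => univ.piAntidiag (q - 1) :=
      Fintype.mem_piFinset.2 fun k => mem_piAntidiag.2 ⟨ha1 k, fun l _ => mem_univ l⟩
    rw [prod_mvPolynomialX_mulVec_pow, coeff_sum_monomial]
    simp_rw [hd]
    rw [filter_eq' _ a, if_pos ha, sum_singleton, prod_mul_distrib, prod_comm (s := univ)]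
    simp_rw [prod_pow_eq_pow_sum, ha2]
  have hdet : ∀ b : Equiv.Perm ι → ℕ, ∑ σ, b σ • ∑ k, Finsupp.single (k, σ k) 1 = d ↔
      ∀ k l, ∑ σ ∈ univ with σ k = l, b σ = a k l := fun b => by
    simp only [Finsupp.ext_iff, Prod.forall, Finsupp.sum_smul_sum_single_perm_apply, d,
      Finsupp.sum_sum_smul_single_apply]
  have key := congrArg (coeff d) (Matrix.sum_prod_mvPolynomialX_mulVec_pow_card_sub_one K ι)
  rw [coeff_sum, ← map_one C, ← map_neg C, ← map_pow, coeff_C_mul, det_mvPolynomialX_pow,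
    coeff_sum_monomial] at key
  simp_rw [hτ, ← mul_sum, FiniteField.sum_prod_pow_card_sub_one, hdet] at key
  rw [mul_comm] at key
  exact mul_left_cancel₀ (pow_ne_zero _ (neg_ne_zero.2 one_ne_zero)) key

end FiniteField

theorem Finset.piAntidiag_univ_eq_filter_piFinset_range {ι : Type*} [Fintype ι] [DecidableEq ι]
    {m N : ℕ} (h : m < N) :
    univ.piAntidiag m = {f ∈ Fintype.piFinset fun _ : ι => range N | ∑ i, f i = m} := by
  ext f
  simp only [mem_piAntidiag, mem_filter, Fintype.mem_piFinset, mem_range, mem_univ, implies_true,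
    and_true, iff_and_self]
  exact fun hf i => (hf ▸ single_le_sum (fun _ _ => Nat.zero_le _) (mem_univ i)).trans_lt h

/-- The combinatorial identity mod `p` extracted from the relative Cartier isomorphism:
for `a : Fin n → Fin n → ℕ` whose every row sum and every column sum equals `p - 1`,
`∏ k, multinomial (a k)` is congruent mod `p` to the signed sum over all
`b : Equiv.Perm (Fin n) → ℕ` with `∑ σ, b σ = p - 1` and `∑_{σ, σ k = l} b σ = a k l`
(all such `b` have values `< p`, so the index set below captures exactly these) of
`multinomial b * ∏ σ, (sign σ) ^ (b σ)`. -/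
theorem prod_multinomial_eq_signed_sum (p : ℕ) (hp : p.Prime) (n : ℕ)
    (a : Fin n → Fin n → ℕ)
    (ha1 : ∀ k, ∑ l, a k l = p - 1) (ha2 : ∀ l, ∑ k, a k l = p - 1) :
    ((∏ k, Nat.multinomial Finset.univ (fun l => a k l) : ℕ) : ZMod p) =
      ∑ b ∈ Finset.filter
          (fun b : Equiv.Perm (Fin n) → ℕ =>
            (∑ σ, b σ = p - 1) ∧
              ∀ k l, ∑ σ ∈ Finset.filter (fun σ : Equiv.Perm (Fin n) => σ k = l)
                  Finset.univ, b σ = a k l)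
          (Fintype.piFinset fun _ => Finset.range p),
        ((Nat.multinomial Finset.univ b : ℕ) : ZMod p) *
          ∏ σ : Equiv.Perm (Fin n), (((Equiv.Perm.sign σ : ℤ) : ZMod p)) ^ (b σ) := by
  have := Fact.mk hp
  have h := FiniteField.prod_multinomial_eq_sum_sign (ZMod p) (Fin n) a
  rw [ZMod.card] at h
  rw [← filter_filter, ← piAntidiag_univ_eq_filter_piFinset_range (Nat.sub_one_lt hp.ne_zero),
    Nat.cast_prod]
  -- `convert` only reconciles the decidability instances of the `∀ k l` filter predicate.
  convert h ha1 ha2 using 3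
end

section
/- Let R and S be commutative rings with Algebra R S and Algebra.FormallySmooth R S. Let Λ be a type, x : Λ → S a family of elements, and let ρ := MvPolynomial.aeval x : MvPolynomial Λ R →ₐ[R] S be the R-algebra homomorphism sending X λ to x λ; endow S with the MvPolynomial Λ R-algebra structure induced by ρ (compatible with the R-algebra structures). Then the following are equivalent: (i) there exists a basis b : Basis Λ S (Ω[S⁄R]) with b λ = D R S (x λ) for all λ; (ii) Algebra.FormallyEtale (MvPolynomial Λ R) S. -/
/-!
By the Jacobi–Zariski sequence for `R → P → S`,
`H¹(L_{S/R}) → H¹(L_{S/P}) → S ⊗[P] Ω[P⁄R] → Ω[S⁄R] → Ω[S⁄P] → 0`,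
with `H¹(L_{S/R}) = 0` since `S` is formally smooth over `R`, the algebra `S` is formally étale
over `P` (i.e. `Ω[S⁄P] = 0` and `H¹(L_{S/P}) = 0`) exactly when `S ⊗[P] Ω[P⁄R] → Ω[S⁄R]` is
bijective. For `P = MvPolynomial Λ R` the source is free on the `1 ⊗ dXλ`, which are sent to
the `D R S (x λ)`.
-/

open MvPolynomial TensorProduct KaehlerDifferential

universe u

theorem Module.Basis.exists_basis_apply_eq_iff_bijective {ι R M N : Type*} [Semiring R]
    [AddCommMonoid M] [AddCommMonoid N] [Module R M] [Module R N]
    (b' : Module.Basis ι R M) (f : M →ₗ[R] N) :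
    (∃ b : Module.Basis ι R N, ∀ i, b i = f (b' i)) ↔ Function.Bijective f := by
  constructor
  · rintro ⟨b, hb⟩
    have hf : f = (b'.equiv b (Equiv.refl ι) : M →ₗ[R] N) :=
      b'.ext fun i => by simp [hb]
    rw [hf]
    exact (b'.equiv b (Equiv.refl ι)).bijective
  · intro hf
    exact ⟨b'.map (LinearEquiv.ofBijective f hf), fun i => rfl⟩

section JacobiZariski

variable (R P S : Type*) [CommRing R] [CommRing P] [CommRing S]
  [Algebra R P] [Algebra P S] [Algebra R S] [IsScalarTower R P S]

theorem KaehlerDifferential.subsingleton_of_surjective_mapBaseChange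
    (h : Function.Surjective (mapBaseChange R P S)) : Subsingleton Ω[S⁄P] := by
  refine subsingleton_of_forall_eq 0 fun ω => ?_
  obtain ⟨η, rfl⟩ := map_surjective R P S ω
  obtain ⟨θ, rfl⟩ := h η
  exact (exact_mapBaseChange_map R P S).apply_apply_eq_zero θ

theorem Algebra.H1Cotangent.subsingleton_of_injective_mapBaseChange
    [Algebra.FormallySmooth R S] (h : Function.Injective (mapBaseChange R P S)) :
    Subsingleton (Algebra.H1Cotangent P S) := by
  refine subsingleton_of_forall_eq 0 fun c => ?_
  have hδ : δ R P S c = 0 :=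
    h <| by rw [(exact_δ_mapBaseChange R P S).apply_apply_eq_zero, map_zero]
  obtain ⟨c', rfl⟩ := (exact_map_δ R P S c).mp hδ
  rw [Subsingleton.elim c' 0, map_zero]

theorem Algebra.formallyEtale_iff_bijective_mapBaseChange [Algebra.FormallySmooth R S] :
    Algebra.FormallyEtale P S ↔ Function.Bijective (mapBaseChange R P S) := by
  refine ⟨fun _ => (tensorKaehlerEquivOfFormallyEtale R P S).bijective, fun h => ⟨?_, ?_⟩⟩
  · exact subsingleton_of_surjective_mapBaseChange R P S h.surjective
  · exact Algebra.H1Cotangent.subsingleton_of_injective_mapBaseChange R P S h.injective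

end JacobiZariski

theorem KaehlerDifferential.mapBaseChange_baseChange_mvPolynomialBasis (R S : Type*)
    [CommRing R] [CommRing S] {Λ : Type*} [Algebra R S] [Algebra (MvPolynomial Λ R) S]
    [IsScalarTower R (MvPolynomial Λ R) S] (l : Λ) :
    mapBaseChange R (MvPolynomial Λ R) S ((mvPolynomialBasis R Λ).baseChange S l) =
      D R S (algebraMap (MvPolynomial Λ R) S (X l)) := by
  rw [Module.Basis.baseChange_apply, mvPolynomialBasis_apply, mapBaseChange_tmul, one_smul,
    map_D]

/-- For a formally smooth algebra `R → S` and a family `x : Λ → S`, inducing on `S` the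
`MvPolynomial Λ R`-algebra structure via `ρ := aeval x`, the family `x` is a differential
basis (the `D R S (x λ)` form a basis of `Ω[S⁄R]`) if and only if `ρ` is formally étale. -/
theorem differential_basis_iff_formallyEtale (R S : Type u) [CommRing R] [CommRing S]
    [Algebra R S] [Algebra.FormallySmooth R S] (Λ : Type u) (x : Λ → S) :
    letI : Algebra (MvPolynomial Λ R) S :=
      (MvPolynomial.aeval x : MvPolynomial Λ R →ₐ[R] S).toRingHom.toAlgebra
    ((∃ b : Module.Basis Λ S (Ω[S⁄R]), ∀ l : Λ, b l = KaehlerDifferential.D R S (x l)) ↔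
      Algebra.FormallyEtale (MvPolynomial Λ R) S) := by
  let : Algebra (MvPolynomial Λ R) S := (aeval x : MvPolynomial Λ R →ₐ[R] S).toRingHom.toAlgebra
  have : IsScalarTower R (MvPolynomial Λ R) S :=
    IsScalarTower.of_algebraMap_eq fun r => ((aeval x).commutes r).symm
  have hD (l : Λ) : D R S (x l) = mapBaseChange R (MvPolynomial Λ R) S
      ((mvPolynomialBasis R Λ).baseChange S l) := by
    rw [mapBaseChange_baseChange_mvPolynomialBasis]
    exact congrArg (D R S) (aeval_X x l).symm
  simp only [hD]
  rw [Module.Basis.exists_basis_apply_eq_iff_bijective,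
    Algebra.formallyEtale_iff_bijective_mapBaseChange R]
end

section
/- Let p be a prime, S a commutative ring with CharP S p, R a commutative ring with Algebra R S, n : ℕ, and x : Fin n → S. Let B := Algebra.adjoin R (Set.range (fun s : S => s^p)). If there exists a basis of S as a B-module indexed by a : Fin n → Fin p whose a-th element is ∏_i (x i)^((a i : ℕ)), then there exists a basis b : Basis (Fin n) S (Ω[S⁄R]) with b i = D R S (x i) for all i. (A p-basis is a differential basis; no noetherian or smoothness hypotheses are needed.) -/
/-!
The universal derivation kills `B = R[Sᵖ]`, because `d (sᵖ) = p sᵖ⁻¹ d s = 0`, and `S` is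
generated over `B` by the `x i`; hence the `D (x i)` span `Ω[S⁄R]`. For their independence we
build, for each `k`, a `B`-linear derivation `∂ₖ` of `S` with `∂ₖ (x j) = δⱼₖ`: on the monomial
basis it is `∂/∂Xₖ`, and it agrees with `∂/∂Xₖ` on every polynomial in the `x i`, because
reducing the exponents of a monomial modulo `p` only splits off a `p`-th power, which is a scalar
from `B` and a constant for `∂/∂Xₖ` in characteristic `p`.
-/

open MvPolynomial

theorem Derivation.map_eq_zero_of_mem_adjoin_range_pow {R S M : Type*} [CommRing R] [CommRing S]
    [Algebra R S] [AddCommGroup M] [Module R M] [Module S M] [IsScalarTower R S M]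
    (p : ℕ) [CharP S p] (d : Derivation R S M) {s : S}
    (hs : s ∈ Algebra.adjoin R (Set.range fun t : S => t ^ p)) : d s = 0 := by
  induction hs using Algebra.adjoin_induction with
  | mem _ ht =>
    obtain ⟨t, rfl⟩ := ht
    rw [Derivation.leibniz_pow, ← Nat.cast_smul_eq_nsmul S, CharP.cast_eq_zero, zero_smul]
  | algebraMap r => exact d.map_algebraMap r
  | add _ _ _ _ ha hb => rw [map_add, ha, hb, add_zero]
  | mul _ _ _ _ ha hb => rw [Derivation.leibniz, ha, hb, smul_zero, smul_zero, add_zero]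

theorem Module.Basis.adjoin_range_eq_top_of_apply_eq_prod_pow {κ ι B S : Type*} [Fintype ι]
    [CommRing B] [CommRing S] [Algebra B S] (𝔅 : Module.Basis κ B S) (x : ι → S)
    (e : κ → ι → ℕ) (h𝔅 : ∀ a, 𝔅 a = ∏ i, x i ^ e a i) :
    Algebra.adjoin B (Set.range x) = ⊤ := by
  rw [← Algebra.toSubmodule_eq_top, eq_top_iff, ← 𝔅.span_eq, Submodule.span_le]
  rintro _ ⟨a, rfl⟩
  rw [h𝔅, SetLike.mem_coe, Subalgebra.mem_toSubmodule]
  exact prod_mem fun i _ => pow_mem (Algebra.subset_adjoin (Set.mem_range_self i)) _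

theorem KaehlerDifferential.span_range_D_eq_top_of_adjoin_eq_top {R B S ι : Type*} [CommRing R]
    [CommRing B] [CommRing S] [Algebra R S] [Algebra B S] (x : ι → S)
    (hB : ∀ b : B, D R S (algebraMap B S b) = 0) (hx : Algebra.adjoin B (Set.range x) = ⊤) :
    Submodule.span S (Set.range fun i => D R S (x i)) = ⊤ := by
  set M := Submodule.span S (Set.range fun i => D R S (x i))
  have hD : ∀ s ∈ Algebra.adjoin B (Set.range x), D R S s ∈ M := fun s hs => by
    induction hs using Algebra.adjoin_induction with
    | mem _ ht =>
      obtain ⟨i, rfl⟩ := ht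
      exact Submodule.subset_span ⟨i, rfl⟩
    | algebraMap b => rw [hB]; exact M.zero_mem
    | add _ _ _ _ ha hb => rw [map_add]; exact M.add_mem ha hb
    | mul _ _ _ _ ha hb =>
      rw [Derivation.leibniz]; exact M.add_mem (M.smul_mem _ hb) (M.smul_mem _ ha)
  rw [eq_top_iff, ← span_range_derivation, Submodule.span_le]
  rintro _ ⟨s, rfl⟩
  exact hD s (hx ▸ Algebra.mem_top)

theorem KaehlerDifferential.linearIndependent_D_of_apply_eq_pi_single {R S ι : Type*}
    [CommRing R] [CommRing S] [Algebra R S] [DecidableEq ι] (x : ι → S)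
    (d : ι → Derivation R S S) (hd : ∀ k j, d k (x j) = (Pi.single k 1 : ι → S) j) :
    LinearIndependent S fun i => D R S (x i) := by
  let f : Ω[S⁄R] →ₗ[S] ι → S := LinearMap.pi fun k => (d k).liftKaehlerDifferential
  have hf : f ∘ (fun i => D R S (x i)) = fun j => Pi.single j 1 := by
    ext j k
    simp [f, hd, Pi.single_comm]
  exact .of_comp f (hf ▸ Pi.linearIndependent_single_one ι S)

section PBasis

variable {ι B S : Type*} [CommRing B] [CommRing S] [Algebra B S] {p : ℕ}

theorem MvPolynomial.aeval_pderiv_pow_mul [CharP S p] (x : ι → S) (k : ι)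
    (P Q : MvPolynomial ι B) :
    aeval x (pderiv k (P ^ p * Q)) = aeval x P ^ p * aeval x (pderiv k Q) := by
  rw [Derivation.leibniz, Derivation.leibniz_pow, map_add, smul_eq_mul, smul_eq_mul, map_mul,
    map_mul, map_nsmul, nsmul_eq_mul, CharP.cast_eq_zero, zero_mul, mul_zero, add_zero, map_pow]

variable [Fintype ι]

noncomputable def pBasisPDeriv (𝔅 : Module.Basis (ι → Fin p) B S) (x : ι → S) (k : ι) :
    S →ₗ[B] S :=
  𝔅.constr B fun a => aeval x (pderiv k (∏ i, (X i : MvPolynomial ι B) ^ (a i : ℕ)))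

variable [NeZero p] [CharP S p] {𝔅 : Module.Basis (ι → Fin p) B S} {x : ι → S}

theorem pBasisPDeriv_aeval_prod_X_pow (h𝔅 : ∀ a, 𝔅 a = ∏ i, x i ^ (a i : ℕ))
    (hpow : ∀ s : S, s ^ p ∈ (algebraMap B S).range) (k : ι) (c : ι → ℕ) :
    pBasisPDeriv 𝔅 x k (aeval x (∏ i, (X i : MvPolynomial ι B) ^ c i)) =
      aeval x (pderiv k (∏ i, (X i : MvPolynomial ι B) ^ c i)) := by
  set a : ι → Fin p := fun i => ⟨c i % p, Nat.mod_lt _ (NeZero.pos p)⟩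
  set Q : MvPolynomial ι B := ∏ i, X i ^ (c i / p)
  have hsplit : ∏ i, X i ^ c i = Q ^ p * ∏ i, (X i : MvPolynomial ι B) ^ (a i : ℕ) := by
    simp only [Q, a, ← Finset.prod_pow, ← Finset.prod_mul_distrib, ← pow_mul, ← pow_add,
      Nat.div_add_mod']
  have hbasis : aeval x (∏ i, (X i : MvPolynomial ι B) ^ (a i : ℕ)) = 𝔅 a := by simp [h𝔅]
  obtain ⟨b, hb⟩ := hpow (aeval x Q)
  rw [hsplit, map_mul, map_pow, hbasis, ← hb, ← Algebra.smul_def, map_smul, pBasisPDeriv,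
    𝔅.constr_basis, Algebra.smul_def, hb, aeval_pderiv_pow_mul]

theorem pBasisPDeriv_aeval (h𝔅 : ∀ a, 𝔅 a = ∏ i, x i ^ (a i : ℕ))
    (hpow : ∀ s : S, s ^ p ∈ (algebraMap B S).range) (k : ι) (P : MvPolynomial ι B) :
    pBasisPDeriv 𝔅 x k (aeval x P) = aeval x (pderiv k P) := by
  have : pBasisPDeriv 𝔅 x k ∘ₗ (aeval x).toLinearMap =
      (aeval x).toLinearMap ∘ₗ (pderiv k).toLinearMap := by
    refine MvPolynomial.linearMap_ext fun c => LinearMap.ext_ring ?_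
    simpa only [LinearMap.comp_apply, AlgHom.toLinearMap_apply, Derivation.coeFn_coe,
      monomial_eq, C_1, one_mul, Finsupp.prod_fintype _ _ fun _ => pow_zero _] using
      pBasisPDeriv_aeval_prod_X_pow h𝔅 hpow k c
  exact LinearMap.congr_fun this P

theorem exists_derivation_apply_eq_pi_single_of_pBasis [DecidableEq ι]
    (h𝔅 : ∀ a, 𝔅 a = ∏ i, x i ^ (a i : ℕ)) (hpow : ∀ s : S, s ^ p ∈ (algebraMap B S).range)
    (k : ι) :
    ∃ d : Derivation B S S, ∀ j, d (x j) = (Pi.single k 1 : ι → S) j := by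
  have hsurj : Function.Surjective (aeval x : MvPolynomial ι B →ₐ[B] S) := by
    rw [← AlgHom.range_eq_top, ← Algebra.adjoin_range_eq_range_aeval]
    exact 𝔅.adjoin_range_eq_top_of_apply_eq_prod_pow x _ h𝔅
  refine ⟨Derivation.mk' (pBasisPDeriv 𝔅 x k) fun s t => ?_, fun j => ?_⟩
  · obtain ⟨P, rfl⟩ := hsurj s
    obtain ⟨Q, rfl⟩ := hsurj t
    simp only [← map_mul, pBasisPDeriv_aeval h𝔅 hpow, Derivation.leibniz, map_add, smul_eq_mul]
  · rw [Derivation.coe_mk', ← aeval_X (R := B) x j, pBasisPDeriv_aeval h𝔅 hpow, pderiv_X]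
    rcases eq_or_ne j k with rfl | hjk <;> simp [*]

end PBasis

/-- A `p`-basis is a differential basis: if the monomials `∏ i, x i ^ (a i)`,
`a : Fin n → Fin p`, form a basis of `S` over the subalgebra `B = R[Sᵖ]`, then the
`D R S (x i)` form a basis of `Ω[S⁄R]`. No noetherian or smoothness hypotheses needed. -/
theorem differential_basis_of_pBasis (p : ℕ) (hp : p.Prime) (R S : Type*) [CommRing R]
    [CommRing S] [Algebra R S] [CharP S p] (n : ℕ) (x : Fin n → S)
    (h : ∃ 𝔅 : Module.Basis (Fin n → Fin p) (Algebra.adjoin R (Set.range fun s : S => s ^ p)) S,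
        ∀ a : Fin n → Fin p, 𝔅 a = ∏ i, x i ^ (a i : ℕ)) :
    ∃ b : Module.Basis (Fin n) S (Ω[S⁄R]), ∀ i, b i = KaehlerDifferential.D R S (x i) := by
  obtain ⟨𝔅, h𝔅⟩ := h
  have : NeZero p := ⟨hp.ne_zero⟩
  have hpow (s : S) :
      s ^ p ∈ (algebraMap (Algebra.adjoin R (Set.range fun s : S => s ^ p)) S).range :=
    ⟨⟨s ^ p, Algebra.subset_adjoin ⟨s, rfl⟩⟩, rfl⟩
  choose d hd using exists_derivation_apply_eq_pi_single_of_pBasis h𝔅 hpow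
  have hind := KaehlerDifferential.linearIndependent_D_of_apply_eq_pi_single x
    (fun k => (d k).restrictScalars R) hd
  have hspan := KaehlerDifferential.span_range_D_eq_top_of_adjoin_eq_top x
    (fun b => (KaehlerDifferential.D R S).map_eq_zero_of_mem_adjoin_range_pow p b.2)
    (𝔅.adjoin_range_eq_top_of_apply_eq_prod_pow x _ h𝔅)
  exact ⟨.mk hind hspan.ge, fun i => Module.Basis.mk_apply _ _ _⟩
end

section
/- Let p be a prime, R a commutative ring with CharP R p, and n : ℕ. Set S := MvPolynomial (Fin n) R and B := Algebra.adjoin R (Set.range (fun i : Fin n => (X i)^p)), the R-subalgebra of S generated by X 0^p, …, X (n−1)^p. Then there exists a basis of S as a B-module indexed by a : Fin n → Fin p whose a-th element is the monomial ∏_i (X i)^((a i : ℕ)). (That is, the variables form a p-basis of the polynomial algebra.) -/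
/-!
`B` is the image of `expand p`. Writing an exponent vector as `d = p • q + r` with `r i < p`
gives `X^d = expand p (X^q) * X^r`, so the monomials `X^r` span. Since this decomposition is
unique, the coefficient of `∑ r, expand p φ_r * X^r` at `p • q + r` is the coefficient of `φ_r`
at `q`, which gives linear independence.
-/

open MvPolynomial

namespace MvPolynomial

variable {σ R : Type*} [CommSemiring R] {p : ℕ}

theorem adjoin_range_X_pow_eq_range_expand (p : ℕ) :
    Algebra.adjoin R (Set.range fun i => (X i : MvPolynomial σ R) ^ p) = (expand p).range :=
  Algebra.adjoin_range_eq_range_aeval R _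

theorem coeff_nsmul_add_expand_mul_monomial_of_ne (φ : MvPolynomial σ R)
    (q : σ →₀ ℕ) {r r' : σ →₀ ℕ} (hr : ∀ i, r i < p) (hr' : ∀ i, r' i < p) (h : r' ≠ r)
    (c : R) : coeff (p • q + r) (expand p φ * monomial r' c) = 0 := by
  classical
  obtain ⟨i, hi⟩ := DFunLike.ne_iff.mp h
  rw [coeff_mul_monomial', ite_eq_right_iff]
  intro hle
  rw [coeff_expand_of_not_dvd φ (i := i), zero_mul]
  rintro ⟨k, hk⟩
  have hk' : r i + p * q i = r' i + p * k := by
    have := hle i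
    simp only [Finsupp.tsub_apply, Finsupp.add_apply, Finsupp.smul_apply, smul_eq_mul] at hk this
    omega
  have := congrArg (· % p) hk'
  simp only [Nat.add_mul_mod_self_left, Nat.mod_eq_of_lt (hr i), Nat.mod_eq_of_lt (hr' i)] at this
  exact hi this.symm

theorem monomial_eq_expand_mul_monomial (d : σ →₀ ℕ) (c : R) :
    monomial d c = expand p (monomial (d.mapRange (· / p) (Nat.zero_div p)) c) *
      monomial (d.mapRange (· % p) (Nat.zero_mod p)) 1 := by
  rw [expand_monomial, monomial_mul, mul_one]
  refine congrArg (monomial · c) (Finsupp.ext fun i => ?_)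
  simp [Nat.div_add_mod]

theorem prod_X_pow_eq_monomial_equivFunOnFinite [Fintype σ] (f : σ → ℕ) :
    ∏ i, (X i : MvPolynomial σ R) ^ f i = monomial (Finsupp.equivFunOnFinite.symm f) 1 := by
  rw [monomial_eq, C_1, one_mul, Finsupp.prod_fintype _ _ (fun _ => pow_zero _)]
  rfl

section Fintype

variable [Fintype σ]

theorem coeff_sum_expand_mul_prod_X_pow [DecidableEq σ] (hp : p ≠ 0)
    (φ : (σ → Fin p) → MvPolynomial σ R) (q : σ →₀ ℕ) (a : σ → Fin p) :
    coeff (p • q + Finsupp.equivFunOnFinite.symm fun i => (a i : ℕ))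
      (∑ b, expand p (φ b) * ∏ i, (X i : MvPolynomial σ R) ^ (b i : ℕ)) = coeff q (φ a) := by
  simp_rw [prod_X_pow_eq_monomial_equivFunOnFinite]
  rw [coeff_sum, Finset.sum_eq_single a]
  · rw [coeff_mul_monomial, coeff_expand_smul p hp, mul_one]
  · intro b _ hba
    refine coeff_nsmul_add_expand_mul_monomial_of_ne _ _ (fun i => (a i).2) (fun i => (b i).2)
      ?_ 1
    exact Finsupp.equivFunOnFinite.symm.injective.ne
      fun h => hba (_root_.funext fun i => Fin.ext (congrFun h i))
  · exact fun h => (h (Finset.mem_univ a)).elim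

local notation "𝔹" => Algebra.adjoin R (Set.range fun i : σ => (X i : MvPolynomial σ R) ^ p)

theorem linearIndependent_prod_X_pow [DecidableEq σ] (hp : p ≠ 0) :
    LinearIndependent 𝔹 fun a : σ → Fin p => ∏ i, (X i : MvPolynomial σ R) ^ (a i : ℕ) := by
  have mem_range : ∀ x : 𝔹, ∃ φ, expand p φ = (x : MvPolynomial σ R) := fun x => by
    simpa [adjoin_range_X_pow_eq_range_expand] using x.2
  rw [Fintype.linearIndependent_iffₛ]
  intro f g hfg a
  choose φ hφ using fun b => mem_range (f b)
  choose ψ hψ using fun b => mem_range (g b)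
  simp only [Subalgebra.smul_def, ← hφ, ← hψ, smul_eq_mul] at hfg
  apply Subtype.ext
  rw [← hφ, ← hψ]
  congr 1
  ext q
  rw [← coeff_sum_expand_mul_prod_X_pow hp φ, hfg, coeff_sum_expand_mul_prod_X_pow hp ψ]

theorem span_prod_X_pow_eq_top (hp : p ≠ 0) :
    Submodule.span 𝔹 (Set.range fun a : σ → Fin p => ∏ i, (X i : MvPolynomial σ R) ^ (a i : ℕ))
      = ⊤ := by
  refine eq_top_iff.mpr fun x _ => ?_
  rw [as_sum x]
  refine Submodule.sum_mem _ fun d _ => ?_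
  let a : σ → Fin p := fun i => ⟨d i % p, Nat.mod_lt _ (Nat.pos_of_ne_zero hp)⟩
  have ha : ∏ i, (X i : MvPolynomial σ R) ^ (a i : ℕ) =
      monomial (d.mapRange (· % p) (Nat.zero_mod p)) 1 := by
    rw [prod_X_pow_eq_monomial_equivFunOnFinite]
    exact congrArg (monomial · 1) (Finsupp.ext fun i => rfl)
  have hmem : expand p (monomial (d.mapRange (· / p) (Nat.zero_div p)) (coeff d x)) ∈ 𝔹 := by
    rw [adjoin_range_X_pow_eq_range_expand]
    exact AlgHom.mem_range_self _ _
  rw [monomial_eq_expand_mul_monomial (p := p), ← ha, ← smul_eq_mul]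
  exact Submodule.smul_mem _ (⟨_, hmem⟩ : 𝔹) (Submodule.subset_span ⟨a, rfl⟩)

noncomputable def pBasis [DecidableEq σ] (hp : p ≠ 0) :
    Module.Basis (σ → Fin p) 𝔹 (MvPolynomial σ R) :=
  .mk (linearIndependent_prod_X_pow hp) (span_prod_X_pow_eq_top hp).ge

theorem pBasis_apply [DecidableEq σ] (hp : p ≠ 0) (a : σ → Fin p) :
    pBasis (R := R) hp a = ∏ i, (X i : MvPolynomial σ R) ^ (a i : ℕ) :=
  Module.Basis.mk_apply _ _ _

end Fintype

end MvPolynomial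

theorem pBasis_mvPolynomial_general (p : ℕ) (hp : p.Prime) (R : Type*) [CommRing R]
    (n : ℕ) :
    ∃ 𝔅 : Module.Basis (Fin n → Fin p)
        (Algebra.adjoin R (Set.range fun i : Fin n => (X i : MvPolynomial (Fin n) R) ^ p))
        (MvPolynomial (Fin n) R),
      ∀ a : Fin n → Fin p, 𝔅 a = ∏ i, (X i : MvPolynomial (Fin n) R) ^ (a i : ℕ) :=
  ⟨pBasis hp.ne_zero, pBasis_apply hp.ne_zero⟩

/-- The variables form a `p`-basis of the polynomial algebra: for `R` of characteristic
`p`, the monomials `∏ i, (X i) ^ (a i)`, `a : Fin n → Fin p`, form a basis of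
`S = MvPolynomial (Fin n) R` over the subalgebra `B = R[X 0 ^ p, …, X (n-1) ^ p]`. -/
theorem pBasis_mvPolynomial (p : ℕ) (hp : p.Prime) (R : Type*) [CommRing R] [CharP R p]
    (n : ℕ) :
    ∃ 𝔅 : Module.Basis (Fin n → Fin p)
        (Algebra.adjoin R (Set.range fun i : Fin n => (X i : MvPolynomial (Fin n) R) ^ p))
        (MvPolynomial (Fin n) R),
      ∀ a : Fin n → Fin p, 𝔅 a = ∏ i, (X i : MvPolynomial (Fin n) R) ^ (a i : ℕ) :=
  pBasis_mvPolynomial_general p hp R n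
end

section
/- Let p be a prime, R a commutative ring with CharP R p, and n : ℕ. Set S := MvPolynomial (Fin n) R and B := Algebra.adjoin R (Set.range (fun i : Fin n => (X i)^p)). Suppose 𝔅 : Basis (Fin n → Fin p) B S is a basis with 𝔅 a = ∏_i (X i)^((a i : ℕ)) for all a. Let Φ := 𝔅.coord (fun _ => p−1) : S →ₗ[B] B be the coordinate functional dual to the monomial ∏_i (X i)^(p−1), and endow the B-module S →ₗ[B] B with its S-module structure given by (s • φ) t = φ (s * t). Then: (i) for every a : Fin n → Fin p, the coordinate functional 𝔅.coord a equals (∏_i (X i)^(p−1−(a i : ℕ))) • Φ; and (ii) the S-linear map S → (S →ₗ[B] B) sending s to s • Φ is bijective; in particular S →ₗ[B] B is a free S-module of rank one generated by Φ. -/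
/-!
If a `B`-basis `𝔅` of `S` admits elements `c a` with `Φ (c a * 𝔅 b) = δ a b`, then the pairing
`(s, t) ↦ Φ (s * t)` is perfect: `𝔅.coord a = Φ (c a * ·)`, and every `φ : S →ₗ[B] B` is
`Φ (s * ·)` for the unique `s = ∑ a, φ (𝔅 a) • c a`. For the monomial basis take
`c a = ∏ i, X i ^ (p - 1 - a i)` and `Φ` the coordinate at `∏ i, X i ^ (p - 1)`: the product
`c a * 𝔅 b` has exponents `p - 1 - a i + b i`, which are `≡ p - 1 (mod p)` in every
coordinate exactly when `a = b`.
-/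

open MvPolynomial

theorem Nat.sub_one_sub_add_mod_ne_sub_one {p a b : ℕ} (ha : a < p) (hb : b < p) (hab : a ≠ b) :
    (p - 1 - a + b) % p ≠ p - 1 := by
  rcases lt_or_gt_of_ne hab with h | h
  · rw [show p - 1 - a + b = p + (b - a - 1) by omega, Nat.add_mod_left,
      Nat.mod_eq_of_lt (by omega)]
    omega
  · rw [Nat.mod_eq_of_lt (by omega)]
    omega

section DualBasis

variable {B S ι : Type*} [CommSemiring B] [CommSemiring S] [Algebra B S] [DecidableEq ι]
  (𝔅 : Module.Basis ι B S) (Φ : S →ₗ[B] B) (c : ι → S)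

theorem Module.Basis.coord_eq_comp_mulLeft_of_dual
    (hc : ∀ a b, Φ (c a * 𝔅 b) = if a = b then 1 else 0) (a : ι) :
    𝔅.coord a = Φ ∘ₗ LinearMap.mulLeft B (c a) :=
  𝔅.ext fun b => by
    simp [hc, Finsupp.single_apply, eq_comm]

theorem Module.Basis.bijective_comp_mulLeft_of_dual [Fintype ι]
    (hc : ∀ a b, Φ (c a * 𝔅 b) = if a = b then 1 else 0) :
    Function.Bijective fun s : S => Φ ∘ₗ LinearMap.mulLeft B s := by
  have hcoord := 𝔅.coord_eq_comp_mulLeft_of_dual Φ c hc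
  refine ⟨fun s s' h => 𝔅.ext_elem fun a => ?_,
    fun φ => ⟨∑ a, φ (𝔅 a) • c a, 𝔅.ext fun b => ?_⟩⟩
  · have h' := LinearMap.congr_fun h (c a)
    simp only [LinearMap.comp_apply, LinearMap.mulLeft_apply] at h'
    change 𝔅.coord a s = 𝔅.coord a s'
    simp only [hcoord, LinearMap.comp_apply, LinearMap.mulLeft_apply, mul_comm (c a), h']
  · simp [Finset.sum_mul, hc]

end DualBasis

section Monomial

variable {R : Type*} [CommSemiring R] {n p : ℕ}
  (𝔅 : Module.Basis (Fin n → Fin p)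
    (Algebra.adjoin R (Set.range fun i : Fin n => (X i : MvPolynomial (Fin n) R) ^ p))
    (MvPolynomial (Fin n) R))

theorem prod_X_pow_pow_mem_adjoin_range_X_pow (e : Fin n → ℕ) :
    ∏ i, ((X i : MvPolynomial (Fin n) R) ^ p) ^ e i ∈
      Algebra.adjoin R (Set.range fun i : Fin n => (X i : MvPolynomial (Fin n) R) ^ p) :=
  Subalgebra.prod_mem _ fun i _ =>
    Subalgebra.pow_mem _ (Algebra.subset_adjoin (Set.mem_range_self i)) _

theorem prod_X_pow_eq_smul_basis
    (h𝔅 : ∀ a : Fin n → Fin p, 𝔅 a = ∏ i, (X i : MvPolynomial (Fin n) R) ^ (a i : ℕ))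
    (hp : 0 < p) (e : Fin n → ℕ) :
    ∏ i, (X i : MvPolynomial (Fin n) R) ^ e i =
      (⟨_, prod_X_pow_pow_mem_adjoin_range_X_pow fun i => e i / p⟩ :
          Algebra.adjoin R (Set.range fun i : Fin n => (X i : MvPolynomial (Fin n) R) ^ p)) •
        𝔅 fun i => ⟨e i % p, Nat.mod_lt _ hp⟩ := by
  rw [h𝔅, Subalgebra.smul_def, smul_eq_mul, ← Finset.prod_mul_distrib]
  refine Finset.prod_congr rfl fun i _ => ?_
  rw [← pow_mul, ← pow_add, Nat.div_add_mod]

theorem coord_prod_X_pow_eq_zero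
    (h𝔅 : ∀ a : Fin n → Fin p, 𝔅 a = ∏ i, (X i : MvPolynomial (Fin n) R) ^ (a i : ℕ))
    (hp : 0 < p) {e : Fin n → ℕ} {c : Fin n → Fin p}
    (he : ∃ i, e i % p ≠ c i) :
    𝔅.coord c (∏ i, (X i : MvPolynomial (Fin n) R) ^ e i) = 0 := by
  obtain ⟨i, hi⟩ := he
  have hne : (fun i => (⟨e i % p, Nat.mod_lt _ hp⟩ : Fin p)) ≠ c :=
    fun h => hi (congrArg Fin.val (congrFun h i))
  rw [prod_X_pow_eq_smul_basis 𝔅 h𝔅 hp, map_smul, Module.Basis.coord_apply,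
    Module.Basis.repr_self, Finsupp.single_eq_of_ne hne.symm, smul_zero]

theorem coord_top_prod_X_pow_mul_basis
    (h𝔅 : ∀ a : Fin n → Fin p, 𝔅 a = ∏ i, (X i : MvPolynomial (Fin n) R) ^ (a i : ℕ))
    (hp : 0 < p) (a b : Fin n → Fin p) :
    𝔅.coord (fun _ => ⟨p - 1, Nat.sub_lt hp one_pos⟩)
        ((∏ i, (X i : MvPolynomial (Fin n) R) ^ (p - 1 - (a i : ℕ))) * 𝔅 b) =
      if a = b then 1 else 0 := by
  rw [h𝔅 b, ← Finset.prod_mul_distrib]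
  simp only [← pow_add]
  split_ifs with hab
  · subst hab
    have htop : ∀ i, p - 1 - (a i : ℕ) + a i = p - 1 := fun i => by have := (a i).is_lt; omega
    simp only [htop]
    rw [← h𝔅 fun _ => ⟨p - 1, Nat.sub_lt hp one_pos⟩, Module.Basis.coord_apply,
      Module.Basis.repr_self, Finsupp.single_eq_same]
  · obtain ⟨i, hi⟩ := Function.ne_iff.mp hab
    exact coord_prod_X_pow_eq_zero 𝔅 h𝔅 hp
      ⟨i, Nat.sub_one_sub_add_mod_ne_sub_one (a i).is_lt (b i).is_lt (Fin.val_ne_of_ne hi)⟩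

end Monomial

theorem coord_dual_pBasis_mvPolynomial_general (p : ℕ) (hp : p.Prime) (R : Type*) [CommRing R]
    (n : ℕ)
    (𝔅 : Module.Basis (Fin n → Fin p)
        (Algebra.adjoin R (Set.range fun i : Fin n => (X i : MvPolynomial (Fin n) R) ^ p))
        (MvPolynomial (Fin n) R))
    (h𝔅 : ∀ a : Fin n → Fin p, 𝔅 a = ∏ i, (X i : MvPolynomial (Fin n) R) ^ (a i : ℕ)) :
    (∀ (a : Fin n → Fin p) (t : MvPolynomial (Fin n) R),
        𝔅.coord a t =
          𝔅.coord (fun _ => ⟨p - 1, Nat.sub_lt hp.pos one_pos⟩)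
            ((∏ i, (X i : MvPolynomial (Fin n) R) ^ (p - 1 - (a i : ℕ))) * t)) ∧
      Function.Bijective (fun s : MvPolynomial (Fin n) R =>
        (𝔅.coord (fun _ => ⟨p - 1, Nat.sub_lt hp.pos one_pos⟩)).comp
          (LinearMap.mulLeft
            (Algebra.adjoin R (Set.range fun i : Fin n => (X i : MvPolynomial (Fin n) R) ^ p))
            s)) := by
  have hdual := coord_top_prod_X_pow_mul_basis 𝔅 h𝔅 hp.pos
  refine ⟨fun a t => ?_, 𝔅.bijective_comp_mulLeft_of_dual _ _ hdual⟩
  rw [𝔅.coord_eq_comp_mulLeft_of_dual _ _ hdual a]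
  rfl

/-- The relative Cartier/trace generator in the polynomial case. Let
`S = MvPolynomial (Fin n) R` with `CharP R p`, `B = R[X 0 ^ p, …, X (n-1) ^ p]`, and let
`𝔅` be the monomial `p`-basis of `S` over `B`. Let `Φ := 𝔅.coord (fun _ => p - 1)` be the
coordinate functional dual to `∏ i, (X i) ^ (p-1)`, and let `s • φ` denote the `S`-action
on `S →ₗ[B] B` given by `(s • φ) t = φ (s * t)` (realized below as `φ ∘ₗ mulLeft B s`).
Then (i) every coordinate functional `𝔅.coord a` equals
`(∏ i, (X i) ^ (p - 1 - a i)) • Φ`, and (ii) the map `s ↦ s • Φ` is bijective, so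
`S →ₗ[B] B` is free of rank one over `S`, generated by `Φ`. -/
theorem coord_dual_pBasis_mvPolynomial (p : ℕ) (hp : p.Prime) (R : Type*) [CommRing R]
    [CharP R p] (n : ℕ)
    (𝔅 : Module.Basis (Fin n → Fin p)
        (Algebra.adjoin R (Set.range fun i : Fin n => (X i : MvPolynomial (Fin n) R) ^ p))
        (MvPolynomial (Fin n) R))
    (h𝔅 : ∀ a : Fin n → Fin p, 𝔅 a = ∏ i, (X i : MvPolynomial (Fin n) R) ^ (a i : ℕ)) :
    (∀ (a : Fin n → Fin p) (t : MvPolynomial (Fin n) R),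
        𝔅.coord a t =
          𝔅.coord (fun _ => ⟨p - 1, Nat.sub_lt hp.pos one_pos⟩)
            ((∏ i, (X i : MvPolynomial (Fin n) R) ^ (p - 1 - (a i : ℕ))) * t)) ∧
      Function.Bijective (fun s : MvPolynomial (Fin n) R =>
        (𝔅.coord (fun _ => ⟨p - 1, Nat.sub_lt hp.pos one_pos⟩)).comp
          (LinearMap.mulLeft
            (Algebra.adjoin R (Set.range fun i : Fin n => (X i : MvPolynomial (Fin n) R) ^ p))
            s)) :=
  coord_dual_pBasis_mvPolynomial_general p hp R n 𝔅 h𝔅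
end

section
/- Let R be a commutative ring and S a commutative local ring with Algebra R S, and let n : ℕ. Suppose Ω[S⁄R] is a free S-module of rank n, i.e., there exists a basis of Ω[S⁄R] indexed by Fin n. Then there exist elements x : Fin n → S and a basis b : Basis (Fin n) S (Ω[S⁄R]) such that b i = D R S (x i) for all i. (Differential bases exist locally.) -/
theorem IsLocalRing.exists_basis_of_span_eq_top {R M ι κ : Type*} [CommRing R] [IsLocalRing R]
    [AddCommGroup M] [Module R M] [Finite ι] (b₀ : Module.Basis ι R M) (v : κ → M)
    (hv : Submodule.span R (Set.range v) = ⊤) :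
    ∃ (a : ι → κ) (b : Module.Basis ι R M), ∀ i, b i = v (a i) := by
  have : Module.Free R M := .of_basis b₀
  have : Module.Finite R M := .of_basis b₀
  have := Module.finitePresentation_of_projective R M
  obtain ⟨_, a, b, hb⟩ := Module.exists_basis_of_span_of_flat v hv
  let e := b.indexEquiv b₀
  exact ⟨a ∘ e.symm, b.reindex e, fun i => by simp [hb]⟩

/-- Differential bases exist locally: if `S` is a local ring and the module of Kähler
differentials `Ω[S⁄R]` is free of rank `n` over `S`, then there are elements
`x : Fin n → S` such that the `D R S (x i)` form a basis of `Ω[S⁄R]`. -/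
theorem exists_differential_basis_of_free (R S : Type*) [CommRing R] [CommRing S]
    [IsLocalRing S] [Algebra R S] (n : ℕ) (h : Nonempty (Module.Basis (Fin n) S (Ω[S⁄R]))) :
    ∃ (x : Fin n → S) (b : Module.Basis (Fin n) S (Ω[S⁄R])),
      ∀ i, b i = KaehlerDifferential.D R S (x i) :=
  IsLocalRing.exists_basis_of_span_eq_top h.some _ (KaehlerDifferential.span_range_derivation R S)
end

section
/- Let p be an odd natural number with p ≥ 3, k ≥ 1 a natural number, and b an odd natural number with 0 < b < p^k. Then the following are equivalent: (i) for every r with 1 ≤ r < k and every odd natural number a with 0 < a < p^r, it is NOT the case that a * p^(k−r) ≤ b ∧ b ≤ (a+1) * p^(k−r); (ii) for every i with 1 ≤ i ≤ k−1, the base-p digit (b / p^i) % p is even. (That is, b/p^k lies in no interval [a/p^r, (a+1)/p^r] with a odd and r < k if and only if all base-p digits of b except the units digit are even.) -/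
/-!
Write `q i = b / p ^ i`, so that `q i = p * q (i + 1) + d i` with `d i` the `i`-th digit.
Since `b` is odd, `b` can only lie in `[a p ^ i, (a + 1) p ^ i]` with `a` odd if `a = q i`;
so the intervals are avoided exactly when every `q i` with `0 < i < k` is even. As `p` is odd,
`q i ≡ q (i + 1) + d i (mod 2)`, and `q k = 0`: all these `q i` are even iff all these digits are.
-/

lemma even_iff_even_div_iff_even_mod {p : ℕ} (hp : Odd p) (n : ℕ) :
    Even n ↔ (Even (n / p) ↔ Even (n % p)) := by
  conv_lhs => rw [← Nat.div_add_mod n p]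
  rw [Nat.even_add, Nat.even_mul, or_iff_right (Nat.not_even_iff_odd.2 hp)]

lemma even_div_pow_iff {p : ℕ} (hp : Odd p) (b i : ℕ) :
    Even (b / p ^ i) ↔ (Even (b / p ^ (i + 1)) ↔ Even (b / p ^ i % p)) := by
  rw [even_iff_even_div_iff_even_mod hp, Nat.div_div_eq_div_mul, ← pow_succ]

lemma forall_even_div_pow_iff_forall_even_digit {p b k : ℕ} (hp : Odd p) (hbk : b < p ^ k)
    (m : ℕ) :
    (∀ i, m ≤ i → i < k → Even (b / p ^ i)) ↔ (∀ i, m ≤ i → i < k → Even (b / p ^ i % p)) := by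
  rcases lt_or_ge m k with hmk | hkm
  · have ih := forall_even_div_pow_iff_forall_even_digit hp hbk (m + 1)
    have peel_first : ∀ P : ℕ → Prop,
        (∀ i, m ≤ i → i < k → P i) ↔ P m ∧ ∀ i, m + 1 ≤ i → i < k → P i := fun P =>
      ⟨fun h => ⟨h m le_rfl hmk, fun i hi hik => h i (by omega) hik⟩,
        fun ⟨hm, h⟩ i hi hik => (eq_or_lt_of_le hi).elim (· ▸ hm) (h i · hik)⟩
    rw [peel_first, peel_first, ← ih]
    refine and_congr_left fun htail => ?_
    have hnext : Even (b / p ^ (m + 1)) := by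
      rcases (show m + 1 ≤ k from hmk).eq_or_lt with hk | hk
      · rw [hk, Nat.div_eq_of_lt hbk]
        exact Even.zero
      · exact htail (m + 1) le_rfl hk
    rw [even_div_pow_iff hp, iff_true_left hnext]
  · constructor <;> intro _ i hi hik <;> omega
termination_by k - m

lemma mul_le_and_le_succ_mul_iff_div_eq_of_odd {a b c : ℕ} (hc : 0 < c) (ha : Odd a)
    (hb : Odd b) : a * c ≤ b ∧ b ≤ (a + 1) * c ↔ b / c = a := by
  have hne : b ≠ (a + 1) * c := fun h => Nat.not_even_iff_odd.2 hb (h ▸ ha.add_one.mul_right c)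
  rw [Nat.div_eq_iff hc]
  rw [add_one_mul] at hne ⊢
  omega

lemma forall_not_mem_odd_interval_iff {p k b : ℕ} (hp : 0 < p) (hb : Odd b) (hbk : b < p ^ k) :
    (∀ r, 1 ≤ r → r < k → ∀ a, Odd a → 0 < a → a < p ^ r →
        ¬(a * p ^ (k - r) ≤ b ∧ b ≤ (a + 1) * p ^ (k - r))) ↔
      ∀ i, 1 ≤ i → i < k → Even (b / p ^ i) := by
  constructor
  · intro H i hi hik
    by_contra hodd
    rw [Nat.not_even_iff_odd] at hodd
    have hq : b / p ^ i < p ^ (k - i) := by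
      refine Nat.div_lt_of_lt_mul ?_
      rwa [← pow_add, Nat.add_sub_cancel' hik.le]
    refine H (k - i) (by omega) (by omega) _ hodd hodd.pos hq ?_
    rw [Nat.sub_sub_self hik.le, mul_le_and_le_succ_mul_iff_div_eq_of_odd (pow_pos hp i) hodd hb]
  · intro H r hr hrk a ha _ _ hab
    rw [mul_le_and_le_succ_mul_iff_div_eq_of_odd (pow_pos hp _) ha hb] at hab
    exact Nat.not_even_iff_odd.2 ha (hab ▸ H (k - r) (by omega) (by omega))

theorem avoid_intervals_iff_digits_even_general (p k b : ℕ) (hp : Odd p)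
    (hb : Odd b) (hbk : b < p ^ k) :
    (∀ r, 1 ≤ r → r < k → ∀ a, Odd a → 0 < a → a < p ^ r →
        ¬(a * p ^ (k - r) ≤ b ∧ b ≤ (a + 1) * p ^ (k - r))) ↔
      (∀ i, 1 ≤ i → i ≤ k - 1 → Even ((b / p ^ i) % p)) := by
  rw [forall_not_mem_odd_interval_iff hp.pos hb hbk,
    forall_even_div_pow_iff_forall_even_digit hp hbk 1]
  refine forall_congr' fun i => forall_congr' fun hi => ?_
  exact imp_congr_left (by omega)

/-- For `p ≥ 3` odd, `k ≥ 1`, and `b` odd with `0 < b < p ^ k`: the fraction `b / p ^ k`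
lies in no interval `[a / p ^ r, (a + 1) / p ^ r]` with `a` odd, `0 < a < p ^ r`, `r < k`
(stated in integer form) if and only if all base-`p` digits of `b` except the units digit
are even. -/
theorem avoid_intervals_iff_digits_even (p k b : ℕ) (hp : Odd p) (hp3 : 3 ≤ p)
    (hk : 1 ≤ k) (hb : Odd b) (hb0 : 0 < b) (hbk : b < p ^ k) :
    (∀ r, 1 ≤ r → r < k → ∀ a, Odd a → 0 < a → a < p ^ r →
        ¬(a * p ^ (k - r) ≤ b ∧ b ≤ (a + 1) * p ^ (k - r))) ↔
      (∀ i, 1 ≤ i → i ≤ k - 1 → Even ((b / p ^ i) % p)) :=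
  avoid_intervals_iff_digits_even_general p k b hp hb hbk
end

section
/- Let F be a field, p a prime with CharP F p, and l a natural number with l ≤ p−1. In the polynomial ring F[x,y] (realized as MvPolynomial (Fin 2) F with x := X 0 and y := X 1), the colon ideal (Ideal.span {x^p, y^p} : Ideal.span {(x*y)^(p−l−1)}) equals Ideal.span {x^(l+1), y^(l+1)}. -/
/-!
Everything in sight is a monomial ideal, and multiplying by the monomial `(xy)^m`, `m = p - l - 1`,
shifts every exponent of a support by `m` in each variable. So `f` lies in the colon ideal iff
every exponent `e` of `f` has `p ≤ e i + m` for some `i`, i.e. `l + 1 ≤ e i`.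
-/

open MvPolynomial

namespace MvPolynomial

variable {σ R : Type*} [CommSemiring R]

theorem support_mul_monomial_one (f : MvPolynomial σ R) (d : σ →₀ ℕ) :
    (f * monomial d 1).support = f.support.map (addRightEmbedding d) :=
  AddMonoidAlgebra.support_coeff_mul_single f _ (by simp) _

theorem mul_monomial_one_mem_ideal_span_monomial_image {f : MvPolynomial σ R}
    {s : Set (σ →₀ ℕ)} {d : σ →₀ ℕ} :
    f * monomial d 1 ∈ Ideal.span ((fun s => monomial s (1 : R)) '' s) ↔
      ∀ e ∈ f.support, ∃ a ∈ s, a ≤ e + d := by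
  simp [mem_ideal_span_monomial_image, support_mul_monomial_one]

theorem colon_ideal_span_monomial_image {s t : Set (σ →₀ ℕ)} {d : σ →₀ ℕ}
    (h : ∀ e, (∃ a ∈ s, a ≤ e + d) ↔ ∃ b ∈ t, b ≤ e) :
    Submodule.colon (Ideal.span ((fun s => monomial s (1 : R)) '' s))
        (Ideal.span {monomial d (1 : R)}) =
      Ideal.span ((fun s => monomial s (1 : R)) '' t) := by
  ext f
  rw [Ideal.mem_colon_span_singleton, mul_monomial_one_mem_ideal_span_monomial_image,
    mem_ideal_span_monomial_image]
  exact forall₂_congr fun e _ => h e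

theorem ideal_span_X_pow_pair (i j : σ) (a b : ℕ) :
    Ideal.span {(X i : MvPolynomial σ R) ^ a, X j ^ b} =
      Ideal.span ((fun s => monomial s (1 : R)) '' {Finsupp.single i a, Finsupp.single j b}) := by
  rw [Set.image_pair, X_pow_eq_monomial, X_pow_eq_monomial]

end MvPolynomial

theorem Finsupp.single_le_add_iff_of_add_eq {σ : Type*} {e d : σ →₀ ℕ} {i : σ} {n k : ℕ}
    (h : n + d i = k) : Finsupp.single i k ≤ e + d ↔ Finsupp.single i n ≤ e := by
  simp only [Finsupp.single_le_iff, Finsupp.add_apply]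
  omega

theorem colon_ideal_eq_general (F : Type*) [Field F] (p : ℕ) (hp : p.Prime)
    (l : ℕ) (hl : l ≤ p - 1) :
    Submodule.colon
        (Ideal.span {(X 0 : MvPolynomial (Fin 2) F) ^ p, (X 1 : MvPolynomial (Fin 2) F) ^ p})
        (Ideal.span {((X 0 : MvPolynomial (Fin 2) F) * X 1) ^ (p - l - 1)})
      = Ideal.span {(X 0 : MvPolynomial (Fin 2) F) ^ (l + 1),
          (X 1 : MvPolynomial (Fin 2) F) ^ (l + 1)} := by
  set d : Fin 2 →₀ ℕ := Finsupp.single 0 (p - l - 1) + Finsupp.single 1 (p - l - 1)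
  have hxy : ((X 0 : MvPolynomial (Fin 2) F) * X 1) ^ (p - l - 1) = monomial d 1 := by
    rw [mul_pow, X_pow_eq_monomial, X_pow_eq_monomial, monomial_mul, mul_one]
  have hpd : ∀ i, l + 1 + d i = p := fun i => by
    have := hp.one_le
    fin_cases i <;> simp [d] <;> omega
  rw [hxy, ideal_span_X_pow_pair, ideal_span_X_pow_pair]
  refine colon_ideal_span_monomial_image fun e => ?_
  simp only [Set.mem_insert_iff, Set.mem_singleton_iff, exists_eq_or_imp, exists_eq_left]
  rw [Finsupp.single_le_add_iff_of_add_eq (hpd 0), Finsupp.single_le_add_iff_of_add_eq (hpd 1)]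

/-- In `F[x,y]` with `char F = p` prime and `l ≤ p - 1`, the colon ideal
`((x^p, y^p) : ((xy)^(p-l-1)))` equals `(x^(l+1), y^(l+1))`. -/
theorem colon_ideal_eq (F : Type*) [Field F] (p : ℕ) (hp : p.Prime) [CharP F p]
    (l : ℕ) (hl : l ≤ p - 1) :
    Submodule.colon
        (Ideal.span {(X 0 : MvPolynomial (Fin 2) F) ^ p, (X 1 : MvPolynomial (Fin 2) F) ^ p})
        (Ideal.span {((X 0 : MvPolynomial (Fin 2) F) * X 1) ^ (p - l - 1)})
      = Ideal.span {(X 0 : MvPolynomial (Fin 2) F) ^ (l + 1),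
          (X 1 : MvPolynomial (Fin 2) F) ^ (l + 1)} :=
  colon_ideal_eq_general F p hp l hl
end

section
/- Let p be an odd prime, F a field with CharP F p, a an odd natural number with 0 < a < p, and e ≥ 1 a natural number. Set m := p^e − ((a+1)/2) * p^(e−1) (a natural number, since a is odd and a < p). Then every exponent pair (i, j) at which the polynomial (x+y)^(a * p^(e−1)) * (x*y)^m ∈ F[x,y] has a nonzero coefficient satisfies i ≥ p^e or j ≥ p^e. (Here F[x,y] is MvPolynomial (Fin 2) F with x := X 0, y := X 1, and the coefficient at (i,j) is the coefficient at the exponent function sending 0 ↦ i, 1 ↦ j.) -/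
open MvPolynomial Finset

/-!
Put `q = p^(e-1)` and `c = (a+1)/2`, so that `m = (p - c) q`. By Frobenius
`(x + y)^(a q) = (x^q + y^q)^a`, so the monomials of the polynomial are
`x^(k q + m) y^((a - k) q + m)` with `k ≤ a`. Since `k + (a - k) = a = 2c - 1`, either
`k ≥ c` or `a - k ≥ c`, and then the corresponding exponent is at least `c q + (p - c) q = p^e`.
-/

theorem Finsupp.single_zero_add_single_one_inj {i j i' j' : ℕ}
    (h : single (0 : Fin 2) i + single 1 j = single 0 i' + single 1 j') : i = i' ∧ j = j' :=
  ⟨by simpa using congr($h 0), by simpa using congr($h 1)⟩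

section Binomial

variable {R : Type*} [CommSemiring R]

theorem X_pow_add_X_pow_pow_mul_X_mul_X_pow (q a m : ℕ) :
    ((X 0 ^ q + X 1 ^ q) ^ a * (X 0 * X 1) ^ m : MvPolynomial (Fin 2) R) =
      ∑ k ∈ range (a + 1),
        monomial (Finsupp.single 0 (k * q + m) + Finsupp.single 1 ((a - k) * q + m))
          (a.choose k : R) := by
  rw [add_pow, sum_mul]
  refine sum_congr rfl fun k _ => ?_
  rw [← C_eq_coe_nat, monomial_eq, Finsupp.prod_add_index' (by simp) (by simp [pow_add]),
    Finsupp.prod_single_index (by simp), Finsupp.prod_single_index (by simp)]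
  ring

theorem exists_of_coeff_X_pow_add_X_pow_pow_mul_X_mul_X_pow_ne_zero {q a m i j : ℕ}
    (h : coeff (Finsupp.single 0 i + Finsupp.single 1 j)
      ((X 0 ^ q + X 1 ^ q) ^ a * (X 0 * X 1) ^ m : MvPolynomial (Fin 2) R) ≠ 0) :
    ∃ k ≤ a, i = k * q + m ∧ j = (a - k) * q + m := by
  rw [X_pow_add_X_pow_pow_mul_X_mul_X_pow, coeff_sum] at h
  obtain ⟨k, hk, hne⟩ := exists_ne_zero_of_sum_ne_zero h
  rw [coeff_monomial, ite_ne_right_iff] at hne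
  obtain ⟨hi, hj⟩ := Finsupp.single_zero_add_single_one_inj hne.1
  exact ⟨k, Nat.lt_succ_iff.mp (mem_range.mp hk), hi.symm, hj.symm⟩

end Binomial

theorem coeff_ne_zero_imp_large_exponent_general (p : ℕ) (hp : p.Prime)
    (F : Type*) [Field F] [CharP F p] (a : ℕ) (ha : Odd a) (hap : a < p)
    (e : ℕ) (he : 1 ≤ e) :
    ∀ i j : ℕ,
      MvPolynomial.coeff (Finsupp.single 0 i + Finsupp.single 1 j)
          (((X 0 : MvPolynomial (Fin 2) F) + X 1) ^ (a * p ^ (e - 1)) *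
            ((X 0 : MvPolynomial (Fin 2) F) * X 1) ^ (p ^ e - ((a + 1) / 2) * p ^ (e - 1)))
        ≠ 0 →
      p ^ e ≤ i ∨ p ^ e ≤ j := by
  intro i j h
  have : Fact p.Prime := ⟨hp⟩
  set q := p ^ (e - 1)
  set c := (a + 1) / 2
  have hpe : p ^ e = p * q := by rw [← pow_succ']; congr 1; omega
  have frobenius :
      ((X 0 : MvPolynomial (Fin 2) F) + X 1) ^ (a * q) = (X 0 ^ q + X 1 ^ q) ^ a := by
    rw [mul_comm, pow_mul, add_pow_char_pow]
  rw [frobenius, hpe, ← Nat.sub_mul] at h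
  obtain ⟨k, hk, rfl, rfl⟩ := exists_of_coeff_X_pow_add_X_pow_pow_mul_X_mul_X_pow_ne_zero h
  rw [hpe, ← add_mul, ← add_mul]
  have : p ≤ k + (p - c) ∨ p ≤ a - k + (p - c) := by obtain ⟨t, rfl⟩ := ha; omega
  exact this.imp (Nat.mul_le_mul_right q) (Nat.mul_le_mul_right q)

/-- For an odd prime `p`, a field `F` of characteristic `p`, an odd `a` with `0 < a < p`,
`e ≥ 1`, and `m := p^e - ((a+1)/2) * p^(e-1)`: every exponent pair `(i, j)` at which the
polynomial `(x + y)^(a * p^(e-1)) * (x * y)^m ∈ F[x,y]` has a nonzero coefficient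
satisfies `i ≥ p^e` or `j ≥ p^e`. -/
theorem coeff_ne_zero_imp_large_exponent (p : ℕ) (hp : p.Prime) (hodd : Odd p)
    (F : Type*) [Field F] [CharP F p] (a : ℕ) (ha : Odd a) (ha0 : 0 < a) (hap : a < p)
    (e : ℕ) (he : 1 ≤ e) :
    ∀ i j : ℕ,
      MvPolynomial.coeff (Finsupp.single 0 i + Finsupp.single 1 j)
          (((X 0 : MvPolynomial (Fin 2) F) + X 1) ^ (a * p ^ (e - 1)) *
            ((X 0 : MvPolynomial (Fin 2) F) * X 1) ^ (p ^ e - ((a + 1) / 2) * p ^ (e - 1)))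
        ≠ 0 →
      p ^ e ≤ i ∨ p ^ e ≤ j :=
  coeff_ne_zero_imp_large_exponent_general p hp F a ha hap e he
end
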